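/- arXiv:2509.11486 — 10 statements merged into one kernel-verified Lean document; each statement's English description precedes it below -/
import Mathlib

section
/- One-step progress of the LMM update with Polyak stepsize: under the setting of the context, assume γ ≤ min{1, C_lb/L}, λ ≥ C_lb·‖z − z*‖, and |⟨v − P(A,λ)v, z − z*⟩| ≤ (1/4)·(h(z) − h(z*)). Then ‖F(x') − z*‖² ≤ ‖z − z*‖² − (γ/8)·(h(z) − h(z*))²/‖Π_A v‖². -/
/-!
The Levenberg–Marquardt direction `d = B(A,λ) A* v` solves `A* A d + λ d = A* v`, so
`‖A d‖² + λ‖d‖² = ⟪v, A d⟫ ≤ ‖Π_A v‖ ‖A d‖`; and the subgradient inequality together with the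
hypothesis on `v - P v` gives `⟪A d, z - z*⟫ ≥ ¾ (h z - h z*)`. The linearised step
`z - γ_k A d` therefore decreases `‖· - z*‖²` by at least `(3/2) γ_k (h z - h z*) - γ_k² ‖A d‖²`,
while the Lipschitz derivative bounds the linearisation error `e` by `L γ_k² ‖d‖²`. Choosing
`λ ≥ C_lb ‖z - z*‖` and `γ ≤ C_lb / L` makes `‖z - z*‖ e ≤ t (1 - t) γ_k (h z - h z*)` with
`t = ‖A d‖ / ‖Π_A v‖ ∈ [0, 1]`, and an elementary inequality in `t` leaves a net decrease of
`γ_k (h z - h z*) / 8`.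
-/

open scoped RealInnerProductSpace

noncomputable section

variable {E Y : Type*} [NormedAddCommGroup E] [InnerProductSpace ℝ E] [FiniteDimensional ℝ E]
  [NormedAddCommGroup Y] [InnerProductSpace ℝ Y] [FiniteDimensional ℝ Y]

/-- `v` is a subgradient of `h` at `z`. -/
def IsSubgradientAt (h : Y → ℝ) (v z : Y) : Prop :=
  ∀ y : Y, h z + ⟪v, y - z⟫ ≤ h y

/-- `B(A,λ) = (A*∘A + λ·id)⁻¹`. -/
def Bop (A : E →L[ℝ] Y) (lam : ℝ) : E →L[ℝ] E :=
  (ContinuousLinearMap.adjoint A ∘L A + lam • ContinuousLinearMap.id ℝ E).inverse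

/-- `P(A,λ) = A ∘ B(A,λ) ∘ A*`. -/
def Pop (A : E →L[ℝ] Y) (lam : ℝ) : Y →L[ℝ] Y :=
  A ∘L Bop A lam ∘L ContinuousLinearMap.adjoint A

/-- `Π_A`, the orthogonal projection of `Y` onto the range of `A`. -/
def projRange (A : E →L[ℝ] Y) : Y →L[ℝ] Y :=
  (LinearMap.range (A : E →ₗ[ℝ] Y)).subtypeL ∘L
    Submodule.orthogonalProjectionOnto (LinearMap.range (A : E →ₗ[ℝ] Y))

open ContinuousLinearMap in
theorem isUnit_adjoint_comp_add_smul_id (A : E →L[ℝ] Y) {lam : ℝ} (hlam : 0 < lam) :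
    IsUnit (adjoint A ∘L A + lam • ContinuousLinearMap.id ℝ E) := by
  refine isUnit_of_forall_le_norm_inner_map _ (Real.toNNReal_pos.mpr hlam) fun u => ?_
  have hinner : ⟪(adjoint A ∘L A + lam • ContinuousLinearMap.id ℝ E) u, u⟫ =
      ‖A u‖ ^ 2 + lam * ‖u‖ ^ 2 := by
    simp [inner_add_left, adjoint_inner_left, real_inner_smul_left]
  rw [hinner, Real.norm_of_nonneg (by positivity), Real.coe_toNNReal _ hlam.le]
  nlinarith [sq_nonneg ‖A u‖]

open ContinuousLinearMap in
theorem adjoint_apply_apply_Bop_add_smul (A : E →L[ℝ] Y) {lam : ℝ} (hlam : 0 < lam) (u : E) :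
    adjoint A (A (Bop A lam u)) + lam • Bop A lam u = u := by
  obtain ⟨T, hT⟩ := isUnit_adjoint_comp_add_smul_id A hlam
  have hinv : (adjoint A ∘L A + lam • ContinuousLinearMap.id ℝ E).IsInvertible :=
    ⟨ContinuousLinearEquiv.unitsEquiv ℝ E T, hT⟩
  exact hinv.self_apply_inverse u

open ContinuousLinearMap in
theorem norm_sq_Pop_add_smul_norm_sq_Bop (A : E →L[ℝ] Y) {lam : ℝ} (hlam : 0 < lam) (v : Y) :
    ‖Pop A lam v‖ ^ 2 + lam * ‖Bop A lam (adjoint A v)‖ ^ 2 = ⟪v, Pop A lam v⟫ := by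
  have h := congrArg (⟪·, Bop A lam (adjoint A v)⟫)
    (adjoint_apply_apply_Bop_add_smul A hlam (adjoint A v))
  simp only [inner_add_left, adjoint_inner_left, real_inner_smul_left,
    real_inner_self_eq_norm_sq] at h
  simpa [Pop] using h

theorem norm_sq_Pop_add_le (A : E →L[ℝ] Y) {lam : ℝ} (hlam : 0 < lam) (v : Y) :
    ‖Pop A lam v‖ ^ 2 + lam * ‖Bop A lam (ContinuousLinearMap.adjoint A v)‖ ^ 2 ≤
      ‖projRange A v‖ * ‖Pop A lam v‖ := by
  have hmem : Pop A lam v ∈ LinearMap.range (A : E →ₗ[ℝ] Y) := LinearMap.mem_range_self _ _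
  calc _ = ⟪v, Pop A lam v⟫ := norm_sq_Pop_add_smul_norm_sq_Bop A hlam v
    _ = ⟪projRange A v, Pop A lam v⟫ := by
      change _ = ⟪(LinearMap.range (A : E →ₗ[ℝ] Y)).starProjection v, _⟫
      rw [Submodule.inner_starProjection_left_eq_right,
        Submodule.starProjection_eq_self_iff.mpr hmem]
    _ ≤ _ := real_inner_le_norm _ _

theorem IsSubgradientAt.sub_le_inner {H : Type*} [NormedAddCommGroup H] [InnerProductSpace ℝ H]
    {h : H → ℝ} {v z : H} (hv : IsSubgradientAt h v z) (y : H) :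
    h z - h y ≤ ⟪v, z - y⟫ := by
  have := hv y
  rw [← neg_sub z y, inner_neg_right] at this
  linarith

theorem norm_sub_smul_sq_le {H : Type*} [NormedAddCommGroup H] [InnerProductSpace ℝ H]
    {a p : H} {c s : ℝ} (hc : 0 ≤ c) (hs : s ≤ ⟪p, a⟫) :
    ‖a - c • p‖ ^ 2 ≤ ‖a‖ ^ 2 - 2 * c * s + c ^ 2 * ‖p‖ ^ 2 := by
  rw [norm_sub_sq_real, real_inner_smul_right, norm_smul, Real.norm_of_nonneg hc, real_inner_comm]
  nlinarith [mul_le_mul_of_nonneg_left hs hc]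

theorem norm_image_sub_sub_fderiv_le_of_lipschitz_segment {V W : Type*}
    [NormedAddCommGroup V] [NormedSpace ℝ V] [NormedAddCommGroup W] [NormedSpace ℝ W]
    {f : V → W} {f' : V → V →L[ℝ] W} {x y : V} {L : ℝ} (hL : 0 ≤ L)
    (hf : ∀ u ∈ segment ℝ x y, HasFDerivAt f (f' u) u)
    (hf' : ∀ u ∈ segment ℝ x y, ‖f' u - f' x‖ ≤ L * ‖u - x‖) :
    ‖f y - f x - f' x (y - x)‖ ≤ L * ‖y - x‖ ^ 2 := by
  have hbound (u) (hu : u ∈ segment ℝ x y) : ‖f' u - f' x‖ ≤ L * ‖y - x‖ :=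
    (hf' u hu).trans (mul_le_mul_of_nonneg_left (norm_sub_le_of_mem_segment hu) hL)
  calc ‖f y - f x - f' x (y - x)‖ ≤ L * ‖y - x‖ * ‖y - x‖ :=
        (convex_segment x y).norm_image_sub_le_of_norm_hasFDerivWithin_le'
          (fun u hu => (hf u hu).hasFDerivWithinAt) hbound
          (left_mem_segment ℝ x y) (right_mem_segment ℝ x y)
    _ = L * ‖y - x‖ ^ 2 := by ring

theorem add_sq_le_sq_sub_div_eight {N W e K t : ℝ} (hN : 0 < N) (hW : 0 ≤ W) (he : 0 ≤ e)
    (hK : 0 ≤ K) (ht₀ : 0 ≤ t) (ht₁ : t ≤ 1)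
    (hW2 : W ^ 2 ≤ N ^ 2 - 3 / 2 * K + t ^ 2 * K) (hNe : N * e ≤ t * (1 - t) * K)
    (hKN : K ≤ 16 / 9 * t ^ 2 * N ^ 2) :
    (W + e) ^ 2 ≤ N ^ 2 - K / 8 := by
  have ht : t * (1 - t) ≤ 1 / 4 := by nlinarith [sq_nonneg (t - 1 / 2)]
  have he2 : e ^ 2 ≤ K / 9 := by
    have htt : (t * (1 - t)) ^ 2 * t ^ 2 ≤ 1 / 16 := by
      have h0 : 0 ≤ t * (1 - t) := mul_nonneg ht₀ (by linarith)
      have h1 : (t * (1 - t)) ^ 2 ≤ (1 / 4) ^ 2 := pow_le_pow_left₀ h0 ht 2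
      have h2 : t ^ 2 ≤ 1 := pow_le_one₀ ht₀ ht₁
      nlinarith
    have hNe2 : (N * e) ^ 2 ≤ K / 9 * N ^ 2 :=
      calc (N * e) ^ 2 ≤ (t * (1 - t) * K) ^ 2 := pow_le_pow_left₀ (by positivity) hNe 2
        _ = (t * (1 - t)) ^ 2 * K * K := by ring
        _ ≤ (t * (1 - t)) ^ 2 * K * (16 / 9 * t ^ 2 * N ^ 2) := by gcongr
        _ = (t * (1 - t)) ^ 2 * t ^ 2 * (16 / 9 * K * N ^ 2) := by ring
        _ ≤ 1 / 16 * (16 / 9 * K * N ^ 2) := by gcongr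
        _ = K / 9 * N ^ 2 := by ring
    rw [mul_pow] at hNe2
    exact le_of_mul_le_mul_left (by linarith) (pow_pos hN 2)
  have hWN : W ≤ N := by
    have : t ^ 2 * K ≤ K := mul_le_of_le_one_left hK (pow_le_one₀ ht₀ ht₁)
    exact (pow_le_pow_iff_left₀ hW hN.le two_ne_zero).mp (by linarith)
  nlinarith [mul_le_mul_of_nonneg_left hWN he, mul_nonneg (sq_nonneg (1 - t)) hK]

theorem polyak_step_sq_le {D g N P δ e W lam γ L C γk : ℝ}
    (hD : 0 < D) (hg : 0 < g) (hN : 0 ≤ N) (hP : 0 ≤ P) (he : 0 ≤ e) (hW : 0 ≤ W)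
    (hlam : 0 ≤ lam) (hγ : 0 < γ) (hγ₁ : γ ≤ 1) (hγL : γ * L ≤ C) (hCN : C * N ≤ lam)
    (hγk : γk = γ * D / g ^ 2) (hop : P ^ 2 + lam * δ ^ 2 ≤ g * P) (hPN : 3 / 4 * D ≤ P * N)
    (hW2 : W ^ 2 ≤ N ^ 2 - 2 * γk * (3 / 4 * D) + γk ^ 2 * P ^ 2)
    (he_le : e ≤ L * (γk ^ 2 * δ ^ 2)) :
    (W + e) ^ 2 ≤ N ^ 2 - γ / 8 * D ^ 2 / g ^ 2 := by
  set t := P / g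
  have hPt : P = t * g := (div_mul_cancel₀ P hg.ne').symm
  have hPg : P ≤ g := by nlinarith [mul_nonneg hlam (sq_nonneg δ)]
  have hγkg : γk * g ^ 2 = γ * D := by rw [hγk]; field_simp
  have hγk₀ : 0 ≤ γk := by rw [hγk]; positivity
  have hγLN : γ * L * N ≤ lam := (mul_le_mul_of_nonneg_right hγL hN).trans hCN
  have hNpos : 0 < N := by
    refine lt_of_le_of_ne hN fun hN0 => ?_
    rw [← hN0, mul_zero] at hPN
    linarith
  have hsq : γk ^ 2 * P ^ 2 ≤ t ^ 2 * (γk * D) :=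
    calc γk ^ 2 * P ^ 2 = γ * (t ^ 2 * (γk * D)) := by
          rw [hPt]; linear_combination (γk * t ^ 2) * hγkg
      _ ≤ t ^ 2 * (γk * D) := mul_le_of_le_one_left (by positivity) hγ₁
  have hNe : N * e ≤ t * (1 - t) * (γk * D) := by
    refine le_of_mul_le_mul_left ?_ hγ
    calc γ * (N * e) ≤ γ * N * (L * (γk ^ 2 * δ ^ 2)) := by
          rw [← mul_assoc]; exact mul_le_mul_of_nonneg_left he_le (by positivity)
      _ = γk ^ 2 * (γ * L * N * δ ^ 2) := by ring
      _ ≤ γk ^ 2 * (lam * δ ^ 2) := by gcongr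
      _ ≤ γk ^ 2 * (P * (g - P)) := mul_le_mul_of_nonneg_left (by linarith) (sq_nonneg γk)
      _ = γ * (t * (1 - t) * (γk * D)) := by
          rw [hPt]; linear_combination (γk * t * (1 - t)) * hγkg
  have hKN : γk * D ≤ 16 / 9 * t ^ 2 * N ^ 2 := by
    refine le_of_mul_le_mul_right ?_ (pow_pos hg 2)
    calc γk * D * g ^ 2 = γ * D ^ 2 := by linear_combination D * hγkg
      _ ≤ D ^ 2 := mul_le_of_le_one_left (sq_nonneg D) hγ₁
      _ ≤ (4 / 3 * (P * N)) ^ 2 := pow_le_pow_left₀ hD.le (by linarith) 2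
      _ = 16 / 9 * t ^ 2 * N ^ 2 * g ^ 2 := by rw [hPt]; ring
  have hgoal : γ / 8 * D ^ 2 / g ^ 2 = γk * D / 8 := by rw [hγk]; ring
  rw [hgoal]
  exact add_sq_le_sq_sub_div_eight hNpos hW he (by positivity) (by positivity)
    (div_le_one_of_le₀ hPg hg.le) (by linarith) hNe hKN

theorem lmm_one_step_progress_general
    (h : Y → ℝ)
    (F : E → Y) (F' : E → E →L[ℝ] Y)
    (hdiff : ∀ u : E, HasFDerivAt F (F' u) u)
    (x : E) (zs : Y) (hzs : h zs ≤ h (F x))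
    (v : Y) (hv : IsSubgradientAt h v (F x))
    (hPiv : projRange (F' x) v ≠ 0)
    (lam γ Clb L : ℝ) (hlam : 0 < lam) (hγpos : 0 < γ) (hLpos : 0 < L)
    (γk : ℝ) (hγk : γk = γ * (h (F x) - h zs) / ‖projRange (F' x) v‖ ^ 2)
    (x' : E) (hx' : x' = x - γk • Bop (F' x) lam (ContinuousLinearMap.adjoint (F' x) v))
    (hLipseg : ∀ u w : E, u ∈ segment ℝ x x' → w ∈ segment ℝ x x' →
      ‖F' u - F' w‖ ≤ L * ‖u - w‖)
    (hγle : γ ≤ min 1 (Clb / L))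
    (hlamge : Clb * ‖F x - zs‖ ≤ lam)
    (hinner : |⟪v - Pop (F' x) lam v, F x - zs⟫| ≤ 1 / 4 * (h (F x) - h zs)) :
    ‖F x' - zs‖ ^ 2 ≤
      ‖F x - zs‖ ^ 2 - γ / 8 * (h (F x) - h zs) ^ 2 / ‖projRange (F' x) v‖ ^ 2 := by
  set A := F' x
  set p := Pop A lam v
  set d := Bop A lam (ContinuousLinearMap.adjoint A v)
  rcases hzs.eq_or_lt with hD | hD
  · have hx'x : x' = x := by rw [hx', hγk, hD, sub_self, mul_zero, zero_div, zero_smul, sub_zero]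
    rw [hx'x, hD, sub_self]
    simp
  have hγk₀ : 0 ≤ γk := hγk ▸ div_nonneg (mul_nonneg hγpos.le (sub_nonneg.2 hzs)) (sq_nonneg _)
  have hγ := le_min_iff.mp hγle
  have hpz : 3 / 4 * (h (F x) - h zs) ≤ ⟪p, F x - zs⟫ := by
    have := (abs_le.mp hinner).2
    rw [inner_sub_left] at this
    linarith [hv.sub_le_inner zs]
  have hstep : x' - x = -(γk • d) := by rw [hx']; abel
  have hstep_sq : ‖x' - x‖ ^ 2 = γk ^ 2 * ‖d‖ ^ 2 := by
    rw [hstep, norm_neg, norm_smul, mul_pow, Real.norm_eq_abs, sq_abs]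
  have htaylor := hstep_sq ▸ norm_image_sub_sub_fderiv_le_of_lipschitz_segment hLpos.le
    (fun u _ => hdiff u) (fun u hu => hLipseg u x hu (left_mem_segment ℝ x x'))
  have hsplit : ‖F x' - zs‖ ≤ ‖F x - zs - γk • p‖ + ‖F x' - F x - A (x' - x)‖ :=
    calc ‖F x' - zs‖ = ‖(F x - zs - γk • p) + (F x' - F x - A (x' - x))‖ := by
          rw [hstep, map_neg, map_smul]
          simp only [p, Pop, ContinuousLinearMap.comp_apply]
          congr 1; abel
      _ ≤ _ := norm_add_le _ _
  refine (pow_le_pow_left₀ (norm_nonneg _) hsplit 2).trans ?_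
  exact polyak_step_sq_le (sub_pos.2 hD) (norm_pos_iff.2 hPiv) (norm_nonneg _) (norm_nonneg _)
    (norm_nonneg _) (norm_nonneg _) hlam.le hγpos hγ.1 ((le_div_iff₀ hLpos).mp hγ.2) hlamge hγk
    (norm_sq_Pop_add_le A hlam v) (hpz.trans (real_inner_le_norm _ _))
    (norm_sub_smul_sq_le hγk₀ hpz) htaylor

/-- One-step progress of the LMM update with the Polyak stepsize. -/
theorem lmm_one_step_progress
    (h : Y → ℝ) (hconv : ConvexOn ℝ Set.univ h)
    (F : E → Y) (F' : E → E →L[ℝ] Y)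
    (hdiff : ∀ u : E, HasFDerivAt F (F' u) u)
    (x : E) (zs : Y) (hzs : h zs ≤ h (F x))
    (v : Y) (hv : IsSubgradientAt h v (F x))
    (hPiv : projRange (F' x) v ≠ 0)
    (lam γ Clb L : ℝ) (hlam : 0 < lam) (hγpos : 0 < γ) (hClb : 0 < Clb) (hLpos : 0 < L)
    (γk : ℝ) (hγk : γk = γ * (h (F x) - h zs) / ‖projRange (F' x) v‖ ^ 2)
    (x' : E) (hx' : x' = x - γk • Bop (F' x) lam (ContinuousLinearMap.adjoint (F' x) v))
    (hLipseg : ∀ u w : E, u ∈ segment ℝ x x' → w ∈ segment ℝ x x' →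
      ‖F' u - F' w‖ ≤ L * ‖u - w‖)
    (hγle : γ ≤ min 1 (Clb / L))
    (hlamge : Clb * ‖F x - zs‖ ≤ lam)
    (hinner : |⟪v - Pop (F' x) lam v, F x - zs⟫| ≤ 1 / 4 * (h (F x) - h zs)) :
    ‖F x' - zs‖ ^ 2 ≤
      ‖F x - zs‖ ^ 2 - γ / 8 * (h (F x) - h zs) ^ 2 / ‖projRange (F' x) v‖ ^ 2 :=
  lmm_one_step_progress_general h F F' hdiff x zs hzs v hv hPiv lam γ Clb L hlam hγpos hLpos γk hγk
    x' hx' hLipseg hγle hlamge hinner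
end
end

section
/- Restricted eigenvalue bound for the damped preconditioner: let A be a real m×d matrix, λ > 0, P := A·(Aᵀ·A + λ·I)⁻¹·Aᵀ (the matrix Aᵀ·A + λ·I being invertible since λ > 0), and s ≥ 0. If v ∈ ℝ^m belongs to the sum of the eigenspaces of the linear endomorphism w ↦ (A·Aᵀ)·w of ℝ^m associated with eigenvalues μ ≥ s, then ‖v − P·v‖₂ ≤ (λ/(s + λ))·‖v‖₂. -/
/-!
`A·Aᵀ` is symmetric, so its eigenspaces are mutually orthogonal. If `A·Aᵀ·x = μ·x`, then
`Aᵀ·A + λ·I` maps `Aᵀ·x` to `(μ + λ)·Aᵀ·x`, hence `P·x = μ/(μ + λ)·x` and `I − P` acts on that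
eigenspace as multiplication by `λ/(μ + λ) ≤ λ/(s + λ)` whenever `μ ≥ s`. Splitting `v` into
orthogonal eigencomponents, Pythagoras turns these componentwise bounds into the bound for `v`.
-/

open Matrix

theorem OrthogonalFamily.norm_apply_le_of_mem_iSup {𝕜 E ι : Type*} [RCLike 𝕜]
    [NormedAddCommGroup E] [InnerProductSpace 𝕜 E] {V : ι → Submodule 𝕜 E}
    (hV : OrthogonalFamily 𝕜 (fun i => V i) fun i => (V i).subtypeₗᵢ) (R : E →ₗ[𝕜] E)
    (a : ι → 𝕜) (hR : ∀ i, ∀ x ∈ V i, R x = a i • x) {c : ℝ} (hc : 0 ≤ c)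
    (ha : ∀ i, ‖a i‖ ≤ c) {v : E} (hv : v ∈ ⨆ i, V i) :
    ‖R v‖ ≤ c * ‖v‖ := by
  obtain ⟨f, hf, rfl⟩ := (Submodule.mem_iSup_iff_exists_finsupp V v).mp hv
  have hpyth := hV.norm_sum (fun i => ⟨f i, hf i⟩) f.support
  have hpyth_map := hV.norm_sum (fun i => ⟨a i • f i, (V i).smul_mem _ (hf i)⟩) f.support
  simp only [Submodule.coe_subtypeₗᵢ, Submodule.subtype_apply, Submodule.coe_norm, norm_smul,
    mul_pow] at hpyth hpyth_map
  refine (pow_le_pow_iff_left₀ (norm_nonneg _) (by positivity) two_ne_zero).mp ?_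
  calc ‖R (f.sum fun _ x => x)‖ ^ 2 = ∑ i ∈ f.support, ‖a i‖ ^ 2 * ‖f i‖ ^ 2 := by
        rw [Finsupp.sum, map_sum, ← hpyth_map]
        exact congrArg (‖·‖ ^ 2) (Finset.sum_congr rfl fun i _ => hR i _ (hf i))
    _ ≤ ∑ i ∈ f.support, c ^ 2 * ‖f i‖ ^ 2 := by
        gcongr with i
        exact ha i
    _ = (c * ‖f.sum fun _ x => x‖) ^ 2 := by
        rw [mul_pow, Finsupp.sum, hpyth, Finset.mul_sum]

theorem Matrix.posDef_transpose_mul_self_add_smul_one {m n : Type*} [Fintype m] [Fintype n]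
    [DecidableEq n] (A : Matrix m n ℝ) {lam : ℝ} (hlam : 0 < lam) :
    (Aᵀ * A + lam • (1 : Matrix n n ℝ)).PosDef :=
  .posSemidef_add (by simpa using posSemidef_conjTranspose_mul_self A) (PosDef.one.smul hlam)

theorem Matrix.mulVec_mul_inv_mul_transpose_of_mulVec_eq_smul {K m n : Type*} [Field K]
    [Fintype m] [Fintype n] [DecidableEq n] (A : Matrix m n K) {lam μ : K}
    (hM : IsUnit (Aᵀ * A + lam • (1 : Matrix n n K))) (hμ : μ + lam ≠ 0) {x : m → K}
    (hx : (A * Aᵀ) *ᵥ x = μ • x) :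
    (A * (Aᵀ * A + lam • (1 : Matrix n n K))⁻¹ * Aᵀ) *ᵥ x = (μ / (μ + lam)) • x := by
  set M := Aᵀ * A + lam • (1 : Matrix n n K)
  have := hM.invertible
  have hMAx : M *ᵥ (Aᵀ *ᵥ x) = (μ + lam) • (Aᵀ *ᵥ x) := by
    rw [add_mulVec, mulVec_mulVec, Matrix.mul_assoc, ← mulVec_mulVec, hx, mulVec_smul,
      smul_mulVec, one_mulVec, add_smul]
  have hMinv : M⁻¹ *ᵥ (Aᵀ *ᵥ x) = (μ + lam)⁻¹ • (Aᵀ *ᵥ x) :=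
    inv_mulVec_eq_vec (by rw [mulVec_smul, hMAx, smul_smul, inv_mul_cancel₀ hμ, one_smul])
  rw [← mulVec_mulVec, ← mulVec_mulVec, hMinv, mulVec_smul, mulVec_mulVec, hx, smul_smul,
    div_eq_inv_mul]

theorem Matrix.sub_toEuclideanLin_mul_inv_mul_transpose_of_mem_eigenspace {m n : Type*}
    [Fintype m] [DecidableEq m] [Fintype n] [DecidableEq n] (A : Matrix m n ℝ) {lam μ : ℝ}
    (hlam : 0 < lam) (hμ : μ + lam ≠ 0) {x : EuclideanSpace ℝ m}
    (hx : x ∈ Module.End.eigenspace (toEuclideanLin (A * Aᵀ)) μ) :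
    x - toEuclideanLin (A * (Aᵀ * A + lam • (1 : Matrix n n ℝ))⁻¹ * Aᵀ) x =
      (lam / (μ + lam)) • x := by
  rw [Module.End.mem_eigenspace_iff, toLpLin_apply] at hx
  have hPx := mulVec_mul_inv_mul_transpose_of_mulVec_eq_smul A
    (posDef_transpose_mul_self_add_smul_one A hlam).isUnit hμ (congrArg WithLp.ofLp hx)
  rw [toLpLin_apply, hPx, WithLp.toLp_smul, WithLp.toLp_ofLp]
  match_scalars
  field_simp
  ring

/-- Restricted eigenvalue bound for the damped preconditioner: on the sum of the eigenspaces
of `A·Aᵀ` with eigenvalue at least `s`, the operator `I − A·(Aᵀ·A + λ·I)⁻¹·Aᵀ` contracts by a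
factor `λ/(s + λ)`. -/
theorem damped_preconditioner_restricted_eigenvalue {m d : ℕ}
    (A : Matrix (Fin m) (Fin d) ℝ) (lam s : ℝ) (hlam : 0 < lam) (hs : 0 ≤ s)
    (v : EuclideanSpace ℝ (Fin m))
    (hv : v ∈ ⨆ μ ∈ {μ : ℝ | s ≤ μ},
        Module.End.eigenspace (Matrix.toEuclideanLin (A * Aᵀ)) μ) :
    ‖v - Matrix.toEuclideanLin
        (A * (Aᵀ * A + lam • (1 : Matrix (Fin d) (Fin d) ℝ))⁻¹ * Aᵀ) v‖ ≤
      lam / (s + lam) * ‖v‖ := by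
  have hT : (toEuclideanLin (A * Aᵀ)).IsSymmetric := by
    rw [isSymmetric_toEuclideanLin_iff]
    simpa using isHermitian_mul_conjTranspose_self A
  rw [iSup_subtype'] at hv
  set R := LinearMap.id -
    toEuclideanLin (A * (Aᵀ * A + lam • (1 : Matrix (Fin d) (Fin d) ℝ))⁻¹ * Aᵀ)
  have hresidual : ∀ μ : {μ : ℝ | s ≤ μ},
      ∀ x ∈ Module.End.eigenspace (toEuclideanLin (A * Aᵀ)) μ, R x = (lam / (μ + lam)) • x :=
    fun ⟨μ, (hμ : s ≤ μ)⟩ x hx =>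
      sub_toEuclideanLin_mul_inv_mul_transpose_of_mem_eigenspace A hlam (by linarith) hx
  have hfactor : ∀ μ : {μ : ℝ | s ≤ μ}, ‖lam / ((μ : ℝ) + lam)‖ ≤ lam / (s + lam) :=
    fun ⟨μ, (hμ : s ≤ μ)⟩ => by
      rw [Real.norm_of_nonneg (div_pos hlam (by linarith)).le]
      gcongr
  exact (hT.orthogonalFamily_eigenspaces.comp Subtype.val_injective).norm_apply_le_of_mem_iSup R
    _ hresidual (by positivity) hfactor hv
end

section
/- Local convergence from one-step contraction and small steps: let E and Y be finite-dimensional real inner product spaces, (x_k) a sequence in E, (z_k) a sequence in Y, x* ∈ E, z* ∈ Y, and constants C > 0, ε > 0, r > 0, q ∈ (0,1) such that: (i) for every k, ‖x_k − x_{k+1}‖ ≤ C·‖z_k − z*‖^{1/2}; and (ii) for every k, if ‖x_k − x*‖ ≤ ε, ‖x_{k+1} − x*‖ ≤ ε, and ‖z_k − z*‖ ≤ r, then ‖z_{k+1} − z*‖ ≤ q·‖z_k − z*‖. If ‖x₀ − x*‖ ≤ ε/2 and ‖z₀ − z*‖ ≤ min{((1 − √q)·ε/(2C))², r}, then for every k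 ≥ 0, ‖x_k − x*‖ ≤ ε and ‖z_k − z*‖ ≤ ‖z₀ − z*‖·q^k. -/
/-!
The distance from `x₀` to `xₖ` is at most the sum of the steps, and while `zⱼ` contracts
geometrically the `j`-th step is at most `C √‖z₀ - z*‖ (√q)ʲ`. The smallness of `z₀` makes the
whole geometric series at most `ε / 2`, so the iterates `x` stay in the `ε`-ball around `x*`,
which is exactly what is needed to apply the contraction at the next step.
-/

open Finset

theorem dist_le_of_dist_succ_le_geometric {α : Type*} [PseudoMetricSpace α] {f : ℕ → α}
    {c s : ℝ} (hc : 0 ≤ c) (hs0 : 0 ≤ s) (hs1 : s < 1) {n : ℕ}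
    (hf : ∀ m < n, dist (f m) (f (m + 1)) ≤ c * s ^ m) :
    dist (f 0) (f n) ≤ c / (1 - s) :=
  calc dist (f 0) (f n) ≤ ∑ m ∈ range n, c * s ^ m := dist_le_range_sum_of_dist_le n (hf _)
    _ = c * ∑ m ∈ Ico 0 n, s ^ m := by rw [← mul_sum, Nat.Ico_zero_eq_range]
    _ ≤ c * (s ^ 0 / (1 - s)) := by gcongr; exact geom_sum_Ico_le_of_lt_one hs0 hs1
    _ = c / (1 - s) := by ring

theorem sqrt_le_sqrt_mul_sqrt_pow_of_le {t Z q : ℝ} (hZ : 0 ≤ Z) (hq : 0 ≤ q) {k : ℕ}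
    (ht : t ≤ Z * q ^ k) : √t ≤ √Z * √q ^ k := by
  rw [Real.sqrt_le_left (by positivity), mul_pow, Real.sq_sqrt hZ, ← pow_mul, mul_comm k,
    pow_mul, Real.sq_sqrt hq]
  exact ht

section LocalConvergence

variable {E Y : Type*} [SeminormedAddCommGroup E] [SeminormedAddCommGroup Y]
  {x : ℕ → E} {z : ℕ → Y} {xs : E} {zs : Y} {C ε r q : ℝ}

theorem norm_sub_le_of_geometric_prefix (hC : 0 ≤ C) (hq0 : 0 ≤ q) (hq1 : q < 1)
    (hstep : ∀ k : ℕ, ‖x k - x (k + 1)‖ ≤ C * √‖z k - zs‖)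
    (hx0 : ‖x 0 - xs‖ ≤ ε / 2) (hsmall : C * √‖z 0 - zs‖ ≤ (1 - √q) * (ε / 2)) {n : ℕ}
    (hz : ∀ j < n, ‖z j - zs‖ ≤ ‖z 0 - zs‖ * q ^ j) :
    ‖x n - xs‖ ≤ ε := by
  have hs1 : √q < 1 := (Real.sqrt_lt' one_pos).2 (by rwa [one_pow])
  have hdist : dist (x 0) (x n) ≤ C * √‖z 0 - zs‖ / (1 - √q) := by
    refine dist_le_of_dist_succ_le_geometric (by positivity) (Real.sqrt_nonneg q) hs1 ?_
    intro m hm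
    rw [dist_eq_norm, mul_assoc]
    exact (hstep m).trans <| mul_le_mul_of_nonneg_left
      (sqrt_le_sqrt_mul_sqrt_pow_of_le (norm_nonneg _) hq0 (hz m hm)) hC
  have hhalf : C * √‖z 0 - zs‖ / (1 - √q) ≤ ε / 2 := by
    rwa [div_le_iff₀ (sub_pos.2 hs1), mul_comm (ε / 2)]
  calc ‖x n - xs‖ ≤ ‖x 0 - xs‖ + dist (x 0) (x n) := by
        rw [dist_comm, dist_eq_norm, add_comm]; exact norm_sub_le_norm_sub_add_norm_sub _ _ _
    _ ≤ ε := by linarith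

theorem norm_sub_le_geometric (hC : 0 ≤ C) (hq0 : 0 ≤ q) (hq1 : q < 1)
    (hstep : ∀ k : ℕ, ‖x k - x (k + 1)‖ ≤ C * √‖z k - zs‖)
    (hcontract : ∀ k : ℕ, ‖x k - xs‖ ≤ ε → ‖x (k + 1) - xs‖ ≤ ε → ‖z k - zs‖ ≤ r →
      ‖z (k + 1) - zs‖ ≤ q * ‖z k - zs‖)
    (hx0 : ‖x 0 - xs‖ ≤ ε / 2) (hsmall : C * √‖z 0 - zs‖ ≤ (1 - √q) * (ε / 2))
    (hz0 : ‖z 0 - zs‖ ≤ r) (n : ℕ) :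
    ‖z n - zs‖ ≤ ‖z 0 - zs‖ * q ^ n := by
  induction n using Nat.strong_induction_on with
  | _ n ih =>
    rcases n with _ | k
    · simp
    have hxk := norm_sub_le_of_geometric_prefix hC hq0 hq1 hstep hx0 hsmall
      (fun j hj => ih j (hj.trans k.lt_succ_self))
    have hxk1 := norm_sub_le_of_geometric_prefix hC hq0 hq1 hstep hx0 hsmall ih
    have hzk := ih k k.lt_succ_self
    have hzr : ‖z k - zs‖ ≤ r :=
      hzk.trans <| (mul_le_of_le_one_right (norm_nonneg _) (pow_le_one₀ hq0 hq1.le)).trans hz0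
    calc ‖z (k + 1) - zs‖ ≤ q * ‖z k - zs‖ := hcontract k hxk hxk1 hzr
      _ ≤ q * (‖z 0 - zs‖ * q ^ k) := by gcongr
      _ = ‖z 0 - zs‖ * q ^ (k + 1) := by ring

end LocalConvergence

theorem local_convergence_from_contraction_general
    {E Y : Type*} [NormedAddCommGroup E]
    [NormedAddCommGroup Y]
    (x : ℕ → E) (z : ℕ → Y) (xs : E) (zs : Y) (C ε r q : ℝ)
    (hC : 0 < C) (hq0 : 0 < q) (hq1 : q < 1)
    (hstep : ∀ k : ℕ, ‖x k - x (k + 1)‖ ≤ C * Real.sqrt ‖z k - zs‖)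
    (hcontract : ∀ k : ℕ, ‖x k - xs‖ ≤ ε → ‖x (k + 1) - xs‖ ≤ ε → ‖z k - zs‖ ≤ r →
      ‖z (k + 1) - zs‖ ≤ q * ‖z k - zs‖)
    (hx0 : ‖x 0 - xs‖ ≤ ε / 2)
    (hz0 : ‖z 0 - zs‖ ≤ min (((1 - Real.sqrt q) * ε / (2 * C)) ^ 2) r) :
    ∀ k : ℕ, ‖x k - xs‖ ≤ ε ∧ ‖z k - zs‖ ≤ ‖z 0 - zs‖ * q ^ k := by
  have hε : 0 ≤ ε := by linarith [norm_nonneg (x 0 - xs)]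
  have hs1 : √q ≤ 1 := Real.sqrt_le_one.2 hq1.le
  have hsmall : C * √‖z 0 - zs‖ ≤ (1 - √q) * (ε / 2) := by
    have hsqrt : √‖z 0 - zs‖ ≤ (1 - √q) * ε / (2 * C) :=
      (Real.sqrt_le_left (div_nonneg (mul_nonneg (sub_nonneg.2 hs1) hε) (by positivity))).2
        (hz0.trans (min_le_left _ _))
    rw [le_div_iff₀ (by positivity)] at hsqrt
    linarith
  have hz := norm_sub_le_geometric hC.le hq0.le hq1 hstep hcontract hx0 hsmall
    (hz0.trans (min_le_right _ _))
  exact fun k => ⟨norm_sub_le_of_geometric_prefix hC.le hq0.le hq1 hstep hx0 hsmall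
    (fun j _ => hz j), hz k⟩

/-- Local convergence from one-step contraction and small steps. -/
theorem local_convergence_from_contraction
    {E Y : Type*} [NormedAddCommGroup E] [InnerProductSpace ℝ E] [FiniteDimensional ℝ E]
    [NormedAddCommGroup Y] [InnerProductSpace ℝ Y] [FiniteDimensional ℝ Y]
    (x : ℕ → E) (z : ℕ → Y) (xs : E) (zs : Y) (C ε r q : ℝ)
    (hC : 0 < C) (hε : 0 < ε) (hr : 0 < r) (hq0 : 0 < q) (hq1 : q < 1)
    (hstep : ∀ k : ℕ, ‖x k - x (k + 1)‖ ≤ C * Real.sqrt ‖z k - zs‖)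
    (hcontract : ∀ k : ℕ, ‖x k - xs‖ ≤ ε → ‖x (k + 1) - xs‖ ≤ ε → ‖z k - zs‖ ≤ r →
      ‖z (k + 1) - zs‖ ≤ q * ‖z k - zs‖)
    (hx0 : ‖x 0 - xs‖ ≤ ε / 2)
    (hz0 : ‖z 0 - zs‖ ≤ min (((1 - Real.sqrt q) * ε / (2 * C)) ^ 2) r) :
    ∀ k : ℕ, ‖x k - xs‖ ≤ ε ∧ ‖z k - zs‖ ≤ ‖z 0 - zs‖ * q ^ k :=
  local_convergence_from_contraction_general x z xs zs C ε r q hC hq0 hq1 hstep hcontract hx0 hz0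
end

section
/- Support and ordering stability for the squared-variable map: let x, x* ∈ ℝ^r (functions Fin r → ℝ) and suppose that (a) for all indices i, j with (x*_i)² ≠ (x*_j)², one has ‖x⊙x − x*⊙x*‖₂ ≤ |(x*_i)² − (x*_j)²|/2, and (b) for every index i with x*_i ≠ 0, one has ‖x⊙x − x*⊙x*‖₂ ≤ (x*_i)²/2. Then the number of nonzero entries of x is at least the number of nonzero entries of x*, and there exists a permutation π of Fin r such that both sequences i ↦ (x_{π(i)})² and i ↦ (x*_{π(i)})² are nonincreasing (antitone with respect to the order on Fin r). -/
/-!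
Every entry of `x ⊙ x` lies within `N = ‖x⊙x − x*⊙x*‖₂` of the corresponding entry of `x* ⊙ x*`.
Hypothesis (b) says `N` is at most half of every nonzero `(x*_i)²`, so these entries cannot drop
to `0`; hypothesis (a) says `N` is at most half of every gap between distinct values `(x*_i)²`, so
a strict inequality `(x*_j)² < (x*_i)²` forces `x_j² ≤ x_i²`. A common nonincreasing ordering is
then obtained by sorting lexicographically, first by `(x*_i)²` and then by `x_i²`.
-/

theorem abs_le_sqrt_sum_sq {ι : Type*} [Fintype ι] (f : ι → ℝ) (k : ι) :
    |f k| ≤ √(∑ i, f i ^ 2) :=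
  Real.abs_le_sqrt <|
    Finset.single_le_sum (f := fun i => f i ^ 2) (fun i _ => sq_nonneg (f i)) (Finset.mem_univ k)

theorem pos_of_abs_sub_le_half {a a' : ℝ} (ha' : 0 < a') (h : |a - a'| ≤ a' / 2) : 0 < a := by
  linarith [(abs_le.mp h).1]

theorem le_of_abs_sub_le_of_le_half_sub {a b a' b' N : ℝ} (ha : |a - a'| ≤ N) (hb : |b - b'| ≤ N)
    (hN : N ≤ (a' - b') / 2) : b ≤ a := by
  linarith [(abs_le.mp ha).1, (abs_le.mp hb).2]

theorem exists_perm_antitone_comp_of_lt_imp_le {n : ℕ} {α β : Type*} [LinearOrder α]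
    [LinearOrder β] (f : Fin n → α) (g : Fin n → β) (h : ∀ i j, g j < g i → f j ≤ f i) :
    ∃ σ : Equiv.Perm (Fin n), Antitone (f ∘ σ) ∧ Antitone (g ∘ σ) := by
  let key : Fin n → βᵒᵈ ×ₗ αᵒᵈ := fun i => toLex (OrderDual.toDual (g i), OrderDual.toDual (f i))
  refine ⟨Tuple.sort key, fun i j hij => ?_, fun i j hij => ?_⟩ <;>
    rcases Prod.Lex.le_iff.mp (Tuple.monotone_sort key hij) with hlt | ⟨heq, hle⟩
  · exact h _ _ hlt
  · exact hle
  · exact hlt.le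
  · exact le_of_eq heq.symm

/-- Support and ordering stability for the squared-variable map `x ↦ x ⊙ x`. Here
`Real.sqrt (∑ k, (x k * x k - xs k * xs k)^2)` is the Euclidean norm `‖x⊙x − x*⊙x*‖₂`. -/
theorem squared_variable_support_and_ordering {r : ℕ} (x xs : Fin r → ℝ)
    (ha : ∀ i j : Fin r, (xs i) ^ 2 ≠ (xs j) ^ 2 →
      Real.sqrt (∑ k, (x k * x k - xs k * xs k) ^ 2) ≤ |(xs i) ^ 2 - (xs j) ^ 2| / 2)
    (hb : ∀ i : Fin r, xs i ≠ 0 →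
      Real.sqrt (∑ k, (x k * x k - xs k * xs k) ^ 2) ≤ (xs i) ^ 2 / 2) :
    (Finset.univ.filter fun i : Fin r => xs i ≠ 0).card ≤
        (Finset.univ.filter fun i : Fin r => x i ≠ 0).card ∧
      ∃ π : Equiv.Perm (Fin r),
        (Antitone fun i : Fin r => (x (π i)) ^ 2) ∧
        (Antitone fun i : Fin r => (xs (π i)) ^ 2) := by
  have hentry (k : Fin r) :
      |x k ^ 2 - xs k ^ 2| ≤ Real.sqrt (∑ k, (x k * x k - xs k * xs k) ^ 2) := by
    simpa only [sq] using abs_le_sqrt_sum_sq (fun k => x k * x k - xs k * xs k) k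
  refine ⟨Finset.card_le_card <| Finset.monotone_filter_right _ fun i _ hi => ?_, ?_⟩
  · have hpos : 0 < xs i ^ 2 := by positivity
    exact pow_ne_zero_iff two_ne_zero |>.mp
      (pos_of_abs_sub_le_half hpos ((hentry i).trans (hb i hi))).ne'
  · refine exists_perm_antitone_comp_of_lt_imp_le (fun i => x i ^ 2) (fun i => xs i ^ 2)
      fun i j hlt => ?_
    have hgap := ha i j hlt.ne'
    rw [abs_of_pos (sub_pos.mpr hlt)] at hgap
    exact le_of_abs_sub_le_of_le_half_sub ((hentry i).trans hgap) ((hentry j).trans hgap) le_rfl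
end

section
/- Residual bound after projecting out the top entries for the squared-variable map: let x, x* ∈ ℝ^r satisfy (a) for all indices i, j with (x*_i)² ≠ (x*_j)², ‖x⊙x − x*⊙x*‖₂ ≤ |(x*_i)² − (x*_j)²|/2, and (b) for every index i with x*_i ≠ 0, ‖x⊙x − x*⊙x*‖₂ ≤ (x*_i)²/2. Let π be a permutation of Fin r such that both i ↦ (x_{π(i)})² and i ↦ (x*_{π(i)})² are nonincreasing, and let r* be the number of nonzero entries of x*. Then for every natural number k with r* ≤ k < r (indices of Fin r taken 0-based), Σ_{i ∈ Fin r, i ≥ k} ((x_{π(i)})² − (x*_{π(i)})²)² ≤ (r − k)·(2·x_{π(k)})⁴; equivalently, the Euclidean norm of the vector obtained from x⊙x − x*⊙x* by zeroing the coordinates π(0), …, π(k−1) is at most √(r − k)·σ², where σ := 2·|x_{π(k)}| is the (k+1)-st largest singular value of the Jacobian 2·diag(x) of the squared-variable map at x. -/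
/-!
Along `π` the squares of `x*` decrease and at most `k` of them are nonzero, so `x*_{π i} = 0`
for every `i ≥ k`. The residual entries there are just `x_{π i}²`, and the ordering of `x`
bounds each of them by `x_{π k}² ≤ (2 x_{π k})²`; there are `r - k` such indices.
-/

open Finset

lemma Finset.card_filter_comp_perm {ι : Type*} [Fintype ι] (π : Equiv.Perm ι) (p : ι → Prop)
    [DecidablePred p] : #{i | p (π i)} = #{i | p i} :=
  card_equiv π (by simp)

lemma Fin.card_filter_le_val {n k : ℕ} : #{i : Fin n | k ≤ (i : ℕ)} = n - k := by
  have h := card_filter_add_card_filter_not (s := (univ : Finset (Fin n))) fun i => (i : ℕ) < k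
  simp only [not_lt, Fin.card_filter_val_lt, card_univ, Fintype.card_fin] at h
  omega

lemma Fin.apply_nonpos_of_card_pos_le {n k : ℕ} {α : Type*} [LinearOrder α] [Zero α]
    {f : Fin n → α} (hf : Antitone f) (hcard : #{i | 0 < f i} ≤ k) {j : Fin n}
    (hj : k ≤ (j : ℕ)) : f j ≤ 0 :=
  not_lt.mp fun hpos => ((Tuple.lt_card_gt_iff_apply_gt_of_antitone hf).2 hpos).not_ge
    (hcard.trans hj)

lemma sq_sq_le_two_mul_pow_four {a c : ℝ} (h : a ^ 2 ≤ c ^ 2) : (a ^ 2) ^ 2 ≤ (2 * c) ^ 4 := by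
  nlinarith [sq_nonneg a, sq_nonneg c]

theorem squared_variable_residual_bound_general {r : ℕ} (x xs : Fin r → ℝ)
    (π : Equiv.Perm (Fin r))
    (hxord : Antitone fun i : Fin r => (x (π i)) ^ 2)
    (hxsord : Antitone fun i : Fin r => (xs (π i)) ^ 2) :
    ∀ k : ℕ, (Finset.univ.filter fun i : Fin r => xs i ≠ 0).card ≤ k → ∀ hk : k < r,
      ∑ i ∈ Finset.univ.filter fun i : Fin r => k ≤ (i : ℕ),
          ((x (π i)) ^ 2 - (xs (π i)) ^ 2) ^ 2 ≤
        ((r : ℝ) - (k : ℝ)) * (2 * x (π ⟨k, hk⟩)) ^ 4 := by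
  intro k hcard hk
  have hcard_sq : #{i | 0 < xs (π i) ^ 2} ≤ k := by
    simpa only [sq_pos_iff, card_filter_comp_perm π fun i => xs i ≠ 0] using hcard
  have hterm : ∀ i ∈ univ.filter fun i : Fin r => k ≤ (i : ℕ),
      ((x (π i)) ^ 2 - (xs (π i)) ^ 2) ^ 2 ≤ (2 * x (π ⟨k, hk⟩)) ^ 4 := by
    intro i hi
    have hki : k ≤ (i : ℕ) := (mem_filter.mp hi).2
    have hxs : xs (π i) ^ 2 = 0 :=
      (Fin.apply_nonpos_of_card_pos_le hxsord hcard_sq hki).antisymm (sq_nonneg _)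
    rw [hxs, sub_zero]
    exact sq_sq_le_two_mul_pow_four (hxord (show (⟨k, hk⟩ : Fin r) ≤ i from hki))
  calc _ ≤ #{i : Fin r | k ≤ (i : ℕ)} • (2 * x (π ⟨k, hk⟩)) ^ 4 := sum_le_card_nsmul _ _ _ hterm
    _ = ((r : ℝ) - (k : ℝ)) * (2 * x (π ⟨k, hk⟩)) ^ 4 := by
      rw [Fin.card_filter_le_val, nsmul_eq_mul, Nat.cast_sub hk.le]

/-- Residual bound after projecting out the top entries for the squared-variable map:
zeroing the coordinates `π 0, …, π (k−1)` of `x⊙x − x*⊙x*` leaves a vector whose squared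
Euclidean norm is at most `(r − k)·(2·x_{π k})⁴`, where `2·|x_{π k}|` is the `(k+1)`-st
largest singular value of the Jacobian `2·diag x` of the squared-variable map at `x`. -/
theorem squared_variable_residual_bound {r : ℕ} (x xs : Fin r → ℝ)
    (ha : ∀ i j : Fin r, (xs i) ^ 2 ≠ (xs j) ^ 2 →
      Real.sqrt (∑ k, (x k * x k - xs k * xs k) ^ 2) ≤ |(xs i) ^ 2 - (xs j) ^ 2| / 2)
    (hb : ∀ i : Fin r, xs i ≠ 0 →
      Real.sqrt (∑ k, (x k * x k - xs k * xs k) ^ 2) ≤ (xs i) ^ 2 / 2)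
    (π : Equiv.Perm (Fin r))
    (hxord : Antitone fun i : Fin r => (x (π i)) ^ 2)
    (hxsord : Antitone fun i : Fin r => (xs (π i)) ^ 2) :
    ∀ k : ℕ, (Finset.univ.filter fun i : Fin r => xs i ≠ 0).card ≤ k → ∀ hk : k < r,
      ∑ i ∈ Finset.univ.filter fun i : Fin r => k ≤ (i : ℕ),
          ((x (π i)) ^ 2 - (xs (π i)) ^ 2) ^ 2 ≤
        ((r : ℝ) - (k : ℝ)) * (2 * x (π ⟨k, hk⟩)) ^ 4 :=
  squared_variable_residual_bound_general x xs π hxord hxsord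
end

section
/- Rank of the Burer–Monteiro Jacobian: let X be a real d×r matrix of rank ρ (Matrix.rank X = ρ). Then the real-linear map Φ from d×r matrices to d×d matrices given by Φ(D) := D·Xᵀ + X·Dᵀ has range of dimension d·ρ − ρ·(ρ − 1)/2, i.e., finrank of the range of Φ equals d·ρ − ρ·(ρ−1)/2. -/
open Matrix

/-!
Write `Φ_X` for `bmJacobian X` and factor `X = P * Y` through `Fin ρ` with `P` injective and
`Y` surjective. Then `Φ_X D = Φ_P (D * Yᵀ)` and `D ↦ D * Yᵀ` is onto, so `Φ_X` and `Φ_P` have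
the same range. Since `P` has a left inverse `L`, a solution of `B * Pᵀ + P * Bᵀ = 0` is
`B = P * A` with `A = L * B` skew-symmetric, so the kernel of `Φ_P` is a copy of the
`ρ(ρ-1)/2`-dimensional space of skew-symmetric `ρ × ρ` matrices, and rank–nullity on the
`dρ`-dimensional domain concludes.
-/

/-- The Jacobian of the Burer–Monteiro map `F(X) = X·Xᵀ`, acting on a direction `D` by
`D ↦ D·Xᵀ + X·Dᵀ`. -/
def bmJacobian {d r : ℕ} (X : Matrix (Fin d) (Fin r) ℝ) :
    Matrix (Fin d) (Fin r) ℝ →ₗ[ℝ] Matrix (Fin d) (Fin d) ℝ where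
  toFun D := D * Xᵀ + X * Dᵀ
  map_add' D₁ D₂ := by
    simp only [Matrix.transpose_add, Matrix.add_mul, Matrix.mul_add]
    abel
  map_smul' c D := by
    simp only [Matrix.transpose_smul, Matrix.smul_mul, Matrix.mul_smul, RingHom.id_apply,
      smul_add]

open Module

namespace Matrix

variable {K : Type*} [Field K]

theorem exists_rank_factorization {m n : Type*} [Fintype m] [Fintype n] (X : Matrix m n K) :
    ∃ (P : Matrix m (Fin X.rank) K) (Y : Matrix (Fin X.rank) n K)
      (L : Matrix (Fin X.rank) m K) (R : Matrix n (Fin X.rank) K),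
      X = P * Y ∧ L * P = 1 ∧ Y * R = 1 := by
  classical
  let f := X.mulVecLin
  let e : LinearMap.range f ≃ₗ[K] (Fin X.rank → K) :=
    LinearEquiv.ofFinrankEq _ _ (finrank_fin_fun K).symm
  let i := (LinearMap.range f).subtype ∘ₗ e.symm.toLinearMap
  let s := e.toLinearMap ∘ₗ f.rangeRestrict
  obtain ⟨g, hg⟩ := i.exists_leftInverse_of_injective <| by
    simp [i, LinearMap.ker_comp]
  obtain ⟨h, hh⟩ := s.exists_rightInverse_of_surjective <| by
    simp [s, LinearMap.range_comp]
  refine ⟨LinearMap.toMatrix' i, LinearMap.toMatrix' s, LinearMap.toMatrix' g,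
    LinearMap.toMatrix' h, ?_, ?_, ?_⟩
  · have hfactor : i ∘ₗ s = toLin' X := by ext; simp [i, s, f]
    rw [← LinearMap.toMatrix'_comp, hfactor, LinearMap.toMatrix'_toLin']
  · rw [← LinearMap.toMatrix'_comp, hg, LinearMap.toMatrix'_id]
  · rw [← LinearMap.toMatrix'_comp, hh, LinearMap.toMatrix'_id]

section SkewSymmetric

variable {n : Type*} [Fintype n] [DecidableEq n]

theorem mem_skewAdjointMatricesSubmodule_one {A : Matrix n n K} :
    A ∈ skewAdjointMatricesSubmodule 1 ↔ Aᵀ = -A := by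
  simp [Matrix.IsSkewAdjoint, Matrix.IsAdjointPair]

variable [LinearOrder n] [CharZero K]

noncomputable def skewAdjointOneEquivStrictUpper :
    skewAdjointMatricesSubmodule (1 : Matrix n n K) ≃ₗ[K] ({p : n × n // p.1 < p.2} → K) where
  toFun A p := A.1 p.1.1 p.1.2
  invFun f := ⟨of fun i j =>
      if h : i < j then f ⟨(i, j), h⟩ else if h' : j < i then -f ⟨(j, i), h'⟩ else 0, by
    rw [mem_skewAdjointMatricesSubmodule_one]
    ext i j
    rcases lt_trichotomy i j with h | rfl | h
    · simp [h, h.not_gt]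
    · simp
    · simp [h, h.not_gt]⟩
  map_add' _ _ := rfl
  map_smul' _ _ := rfl
  left_inv A := by
    have hA := congrFun₂ (mem_skewAdjointMatricesSubmodule_one.mp A.2)
    ext i j
    rcases lt_trichotomy i j with h | rfl | h
    · simp [h]
    · simpa using (self_eq_neg.mp (hA i i)).symm
    · simpa [h, h.not_gt] using (hA j i).symm
  right_inv f := by
    ext p
    simp [p.2]

theorem finrank_skewAdjointMatricesSubmodule_one :
    finrank K (skewAdjointMatricesSubmodule (1 : Matrix n n K)) = (Fintype.card n).choose 2 := by
  rw [skewAdjointOneEquivStrictUpper.finrank_eq, finrank_fintype_fun_eq_card,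
    Fintype.card_subtype, Fintype.card_product_filter_lt]

end SkewSymmetric

end Matrix

section BMJacobian

variable {d k r : ℕ}

theorem bmJacobian_apply (X : Matrix (Fin d) (Fin r) ℝ) (D : Matrix (Fin d) (Fin r) ℝ) :
    bmJacobian X D = D * Xᵀ + X * Dᵀ :=
  rfl

theorem bmJacobian_mul_apply (P : Matrix (Fin d) (Fin k) ℝ) (Y : Matrix (Fin k) (Fin r) ℝ)
    (D : Matrix (Fin d) (Fin r) ℝ) : bmJacobian (P * Y) D = bmJacobian P (D * Yᵀ) := by
  simp only [bmJacobian_apply, transpose_mul, transpose_transpose, Matrix.mul_assoc]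

theorem range_bmJacobian_mul_of_mul_eq_one (P : Matrix (Fin d) (Fin k) ℝ)
    {Y : Matrix (Fin k) (Fin r) ℝ} {R : Matrix (Fin r) (Fin k) ℝ} (hYR : Y * R = 1) :
    LinearMap.range (bmJacobian (P * Y)) = LinearMap.range (bmJacobian P) := by
  ext M
  constructor
  · rintro ⟨D, rfl⟩
    exact ⟨D * Yᵀ, (bmJacobian_mul_apply P Y D).symm⟩
  · rintro ⟨B, rfl⟩
    refine ⟨B * Rᵀ, ?_⟩
    rw [bmJacobian_mul_apply, Matrix.mul_assoc, ← transpose_mul, hYR, transpose_one,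
      Matrix.mul_one]

theorem ker_bmJacobian_of_mul_eq_one {P : Matrix (Fin d) (Fin k) ℝ}
    {L : Matrix (Fin k) (Fin d) ℝ} (hLP : L * P = 1) :
    LinearMap.ker (bmJacobian P) =
      (skewAdjointMatricesSubmodule 1).map (mulLeftLinearMap (Fin k) ℝ P) := by
  ext B
  simp only [LinearMap.mem_ker, Submodule.mem_map, mem_skewAdjointMatricesSubmodule_one,
    mulLeftLinearMap_apply, bmJacobian_apply]
  constructor
  · intro hB
    have hBP : B * Pᵀ = -(P * Bᵀ) := eq_neg_of_add_eq_zero_left hB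
    have hB' : B = -(P * (L * B)ᵀ) :=
      calc B = B * (L * P)ᵀ := by rw [hLP, transpose_one, Matrix.mul_one]
        _ = B * Pᵀ * Lᵀ := by rw [transpose_mul, Matrix.mul_assoc]
        _ = -(P * (L * B)ᵀ) := by rw [hBP, transpose_mul, Matrix.neg_mul, Matrix.mul_assoc]
    have hskew : (L * B)ᵀ = -(L * B) := by
      have h := congrArg (L * ·) hB'
      simp only [Matrix.mul_neg, ← Matrix.mul_assoc, hLP, Matrix.one_mul] at h
      exact neg_eq_iff_eq_neg.mp h.symm
    refine ⟨L * B, hskew, ?_⟩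
    conv_rhs => rw [hB', hskew, Matrix.mul_neg, neg_neg]
  · rintro ⟨A, hA, rfl⟩
    simp [transpose_mul, hA, Matrix.mul_assoc]

theorem finrank_ker_bmJacobian_of_mul_eq_one {P : Matrix (Fin d) (Fin k) ℝ}
    {L : Matrix (Fin k) (Fin d) ℝ} (hLP : L * P = 1) :
    finrank ℝ (LinearMap.ker (bmJacobian P)) = k.choose 2 := by
  have hinj : Function.Injective (mulLeftLinearMap (Fin k) ℝ P) := fun A A' h => by
    simpa [← Matrix.mul_assoc, hLP] using congrArg (L * ·) h
  rw [ker_bmJacobian_of_mul_eq_one hLP, ← (Submodule.equivMapOfInjective _ hinj _).finrank_eq,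
    finrank_skewAdjointMatricesSubmodule_one, Fintype.card_fin]

end BMJacobian

/-- Rank of the Burer–Monteiro Jacobian: if `X` has rank `ρ`, the range of
`D ↦ D·Xᵀ + X·Dᵀ` has dimension `d·ρ − ρ·(ρ − 1)/2`. -/
theorem bmJacobian_rank {d r : ℕ} (X : Matrix (Fin d) (Fin r) ℝ) (ρ : ℕ)
    (hX : X.rank = ρ) :
    Module.finrank ℝ (LinearMap.range (bmJacobian X)) = d * ρ - ρ * (ρ - 1) / 2 := by
  subst hX
  obtain ⟨P, Y, L, R, hPY, hLP, hYR⟩ := X.exists_rank_factorization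
  have rank_nullity := (bmJacobian P).finrank_range_add_finrank_ker
  rw [finrank_ker_bmJacobian_of_mul_eq_one hLP, finrank_matrix, Fintype.card_fin,
    Fintype.card_fin, finrank_self, mul_one] at rank_nullity
  have hrange : LinearMap.range (bmJacobian X) = LinearMap.range (bmJacobian P) := by
    rw [← range_bmJacobian_mul_of_mul_eq_one P hYR, ← hPY]
  rw [hrange, ← Nat.choose_two_right]
  omega
end

section
/- Rank of the asymmetric factorization Jacobian: let X be a real d₁×r matrix of rank ρ₁ and Y a real d₂×r matrix of rank ρ₂. Then the real-linear map Φ from pairs (A, B) ∈ Matrix (Fin d₁) (Fin r) ℝ × Matrix (Fin d₂) (Fin r) ℝ to Matrix (Fin d₁) (Fin d₂) ℝ given by Φ(A, B) := A·Yᵀ + X·Bᵀ has range of dimension d₁·ρ₂ + d₂·ρ₁ − ρ₁·ρ₂. -/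
open Matrix Module

section helpers
variable {m n p : Type*} [Fintype n]
lemma row_mul_transpose (M : Matrix m n ℝ) (N : Matrix p n ℝ) (i : m) :
    (M * Nᵀ) i = N.mulVec (M i) := by
  funext j
  simp [Matrix.mul_apply, Matrix.mulVec, dotProduct, mul_comm]

lemma col_mul (P : Matrix m n ℝ) (Q : Matrix n p ℝ) (j : p) :
    (P * Q)ᵀ j = P.mulVec (Qᵀ j) := by
  funext i
  simp [Matrix.mul_apply, Matrix.mulVec, dotProduct]
end helpers

section basisMatrix
variable {d ρ : ℕ} {W : Submodule ℝ (Fin d → ℝ)}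

noncomputable def basisMatrix (b : Basis (Fin ρ) ℝ W) : Matrix (Fin d) (Fin ρ) ℝ :=
  Matrix.of fun i a => (b a : Fin d → ℝ) i

lemma basisMatrix_mulVec (b : Basis (Fin ρ) ℝ W) (c : Fin ρ → ℝ) :
    (basisMatrix b).mulVec c = ((∑ a, c a • b a : W) : Fin d → ℝ) := by
  funext i
  have : ((∑ a, c a • b a : W) : Fin d → ℝ) = ∑ a, c a • ((b a : Fin d → ℝ)) := by
    push_cast
    rfl
  rw [this]
  simp [basisMatrix, Matrix.mulVec, dotProduct, Finset.sum_apply, mul_comm]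

lemma range_basisMatrix (b : Basis (Fin ρ) ℝ W) :
    LinearMap.range (basisMatrix b).mulVecLin = W := by
  apply le_antisymm
  · rintro x ⟨c, rfl⟩
    rw [Matrix.mulVecLin_apply, basisMatrix_mulVec]
    exact (∑ a, c a • b a : W).2
  · intro u hu
    refine ⟨b.repr ⟨u, hu⟩, ?_⟩
    rw [Matrix.mulVecLin_apply, basisMatrix_mulVec, b.sum_repr ⟨u, hu⟩]

lemma basisMatrix_injective (b : Basis (Fin ρ) ℝ W) :
    Function.Injective (basisMatrix b).mulVecLin := by
  rw [← LinearMap.ker_eq_bot, LinearMap.ker_eq_bot']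
  intro c hc
  have h0 : ((∑ a, c a • b a : W) : Fin d → ℝ) = 0 := by
    rw [← basisMatrix_mulVec b c]
    exact hc
  have h1 : (∑ a, c a • b a : W) = 0 := Subtype.ext h0
  funext a
  exact Fintype.linearIndependent_iff.mp b.linearIndependent c h1 a

lemma toMatrix'_basisMatrix (b : Basis (Fin ρ) ℝ W) :
    LinearMap.toMatrix' (basisMatrix b).mulVecLin = basisMatrix b := by
  rw [← Matrix.toLin'_apply', LinearMap.toMatrix'_toLin']
end basisMatrix

def asymJacobian {d₁ d₂ r : ℕ}
    (X : Matrix (Fin d₁) (Fin r) ℝ) (Y : Matrix (Fin d₂) (Fin r) ℝ) :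
    (Matrix (Fin d₁) (Fin r) ℝ × Matrix (Fin d₂) (Fin r) ℝ) →ₗ[ℝ]
      Matrix (Fin d₁) (Fin d₂) ℝ where
  toFun p := p.1 * Yᵀ + X * p.2ᵀ
  map_add' p q := by
    simp only [Prod.fst_add, Prod.snd_add, Matrix.transpose_add, Matrix.add_mul,
      Matrix.mul_add]
    abel
  map_smul' c p := by
    simp only [Prod.smul_fst, Prod.smul_snd, Matrix.transpose_smul, Matrix.smul_mul,
      Matrix.mul_smul, RingHom.id_apply, smul_add]

/-- Rank of the asymmetric factorization Jacobian: if `X` has rank `ρ₁` and `Y` has rank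
`ρ₂`, the range of `(A, B) ↦ A·Yᵀ + X·Bᵀ` has dimension `d₁·ρ₂ + d₂·ρ₁ − ρ₁·ρ₂`. -/
theorem asymJacobian_rank {d₁ d₂ r : ℕ}
    (X : Matrix (Fin d₁) (Fin r) ℝ) (Y : Matrix (Fin d₂) (Fin r) ℝ) (ρ₁ ρ₂ : ℕ)
    (hX : X.rank = ρ₁) (hY : Y.rank = ρ₂) :
    Module.finrank ℝ (LinearMap.range (asymJacobian X Y)) = d₁ * ρ₂ + d₂ * ρ₁ - ρ₁ * ρ₂ := by
  classical
  set U : Submodule ℝ (Fin d₁ → ℝ) := LinearMap.range X.mulVecLin with hUdef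
  set V : Submodule ℝ (Fin d₂ → ℝ) := LinearMap.range Y.mulVecLin with hVdef
  have hU : finrank ℝ U = ρ₁ := hX
  have hV : finrank ℝ V = ρ₂ := hY
  -- the two constraint subspaces
  let S₁ : Submodule ℝ (Matrix (Fin d₁) (Fin d₂) ℝ) :=
    { carrier := {M | ∀ i, M i ∈ V}
      add_mem' := fun ha hb i => V.add_mem (ha i) (hb i)
      zero_mem' := fun i => V.zero_mem
      smul_mem' := fun c M hM i => V.smul_mem c (hM i) }
  let S₂ : Submodule ℝ (Matrix (Fin d₁) (Fin d₂) ℝ) :=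
    { carrier := {M | ∀ j, Mᵀ j ∈ U}
      add_mem' := fun ha hb j => U.add_mem (ha j) (hb j)
      zero_mem' := fun j => U.zero_mem
      smul_mem' := fun c M hM j => U.smul_mem c (hM j) }
  -- range of the Jacobian is S₁ ⊔ S₂
  have hrange : LinearMap.range (asymJacobian X Y) = S₁ ⊔ S₂ := by
    apply le_antisymm
    · rintro M ⟨⟨A, B⟩, rfl⟩
      have h1 : A * Yᵀ ∈ S₁ := by
        intro i
        rw [row_mul_transpose]
        exact ⟨A i, rfl⟩
      have h2 : X * Bᵀ ∈ S₂ := by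
        intro j
        rw [col_mul]
        exact ⟨Bᵀᵀ j, rfl⟩
      show A * Yᵀ + X * Bᵀ ∈ S₁ ⊔ S₂
      exact Submodule.add_mem _ (Submodule.mem_sup_left h1) (Submodule.mem_sup_right h2)
    · rw [sup_le_iff]
      constructor
      · intro M hM
        have hM' : ∀ i, ∃ a, Y.mulVec a = M i := fun i => hM i
        choose A hA using hM'
        refine ⟨(Matrix.of A, 0), ?_⟩
        show (Matrix.of A) * Yᵀ + X * (0 : Matrix (Fin d₂) (Fin r) ℝ)ᵀ = M
        rw [Matrix.transpose_zero, Matrix.mul_zero, add_zero]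
        funext i
        rw [row_mul_transpose]
        exact hA i
      · intro M hM
        have hM' : ∀ j, ∃ b, X.mulVec b = Mᵀ j := fun j => hM j
        choose B hB using hM'
        refine ⟨(0, Matrix.of B), ?_⟩
        show (0 : Matrix (Fin d₁) (Fin r) ℝ) * Yᵀ + X * (Matrix.of B)ᵀ = M
        rw [Matrix.zero_mul, zero_add]
        apply Matrix.ext
        intro i j
        have : (X * (Matrix.of B)ᵀ)ᵀ j = Mᵀ j := by
          rw [col_mul]
          exact hB j
        exact congrFun this i
  -- finrank of S₁
  have e₁ : S₁ ≃ₗ[ℝ] (Fin d₁ → V) :=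
    { toFun := fun M i => ⟨M.1 i, M.2 i⟩
      map_add' := fun a b => rfl
      map_smul' := fun c a => rfl
      invFun := fun f => ⟨Matrix.of fun i => (f i : Fin d₂ → ℝ), fun i => (f i).2⟩
      left_inv := fun M => rfl
      right_inv := fun f => funext fun i => Subtype.ext rfl }
  have h₁ : finrank ℝ S₁ = d₁ * ρ₂ := by
    rw [e₁.finrank_eq, Module.finrank_pi_fintype, Finset.sum_const, Finset.card_univ,
      Fintype.card_fin, smul_eq_mul, hV]
  -- finrank of S₂
  have e₂ : S₂ ≃ₗ[ℝ] (Fin d₂ → U) :=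
    { toFun := fun M j => ⟨M.1ᵀ j, M.2 j⟩
      map_add' := fun a b => rfl
      map_smul' := fun c a => rfl
      invFun := fun f => ⟨Matrix.of fun i j => (f j : Fin d₁ → ℝ) i, fun j => (f j).2⟩
      left_inv := fun M => rfl
      right_inv := fun f => funext fun j => Subtype.ext rfl }
  have h₂ : finrank ℝ S₂ = d₂ * ρ₁ := by
    rw [e₂.finrank_eq, Module.finrank_pi_fintype, Finset.sum_const, Finset.card_univ,
      Fintype.card_fin, smul_eq_mul, hU]
  -- bases of U and V
  let bU : Basis (Fin ρ₁) ℝ U := Module.finBasisOfFinrankEq ℝ U hU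
  let bV : Basis (Fin ρ₂) ℝ V := Module.finBasisOfFinrankEq ℝ V hV
  let Bu : Matrix (Fin d₁) (Fin ρ₁) ℝ := basisMatrix bU
  let Bv : Matrix (Fin d₂) (Fin ρ₂) ℝ := basisMatrix bV
  -- the intersection as the range of C ↦ Bu * C * Bvᵀ
  let Ψ : Matrix (Fin ρ₁) (Fin ρ₂) ℝ →ₗ[ℝ] Matrix (Fin d₁) (Fin d₂) ℝ :=
    { toFun := fun C => Bu * C * Bvᵀ
      map_add' := fun C D => by
        show Bu * (C + D) * Bvᵀ = Bu * C * Bvᵀ + Bu * D * Bvᵀ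
        rw [Matrix.mul_add, Matrix.add_mul]
      map_smul' := fun c C => by
        show Bu * (c • C) * Bvᵀ = c • (Bu * C * Bvᵀ)
        rw [Matrix.mul_smul, Matrix.smul_mul] }
  have hΨinj : Function.Injective Ψ := by
    rw [← LinearMap.ker_eq_bot, LinearMap.ker_eq_bot']
    intro C hC
    have hC' : Bu * C * Bvᵀ = 0 := hC
    have h1 : C * Bvᵀ = 0 := by
      have hcols : ∀ j, (C * Bvᵀ)ᵀ j = 0 := by
        intro j
        apply basisMatrix_injective bU
        rw [map_zero, Matrix.mulVecLin_apply, ← col_mul, ← Matrix.mul_assoc, hC']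
        rfl
      apply Matrix.ext
      intro i j
      exact congrFun (hcols j) i
    funext i
    apply basisMatrix_injective bV
    show (basisMatrix bV).mulVecLin (C i) = (basisMatrix bV).mulVecLin 0
    rw [map_zero, Matrix.mulVecLin_apply, ← row_mul_transpose, h1]
    rfl
  have hΨrange : LinearMap.range Ψ = S₁ ⊓ S₂ := by
    apply le_antisymm
    · rintro M ⟨C, rfl⟩
      rw [Submodule.mem_inf]
      constructor
      · intro i
        show (Bu * C * Bvᵀ) i ∈ V
        rw [row_mul_transpose]
        rw [← range_basisMatrix bV]
        exact ⟨(Bu * C) i, rfl⟩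
      · intro j
        show (Bu * C * Bvᵀ)ᵀ j ∈ U
        rw [Matrix.mul_assoc, col_mul]
        rw [← range_basisMatrix bU]
        exact ⟨(C * Bvᵀ)ᵀ j, rfl⟩
    · intro M hM
      obtain ⟨hM1, hM2⟩ := Submodule.mem_inf.mp hM
      have h1 : ∀ i, ∃ p, Bv.mulVec p = M i := by
        intro i
        have h := hM1 i
        rw [← range_basisMatrix bV] at h
        exact h
      choose P hP using h1
      have hMP : M = (Matrix.of P) * Bvᵀ := by
        funext i
        rw [row_mul_transpose]
        exact (hP i).symm
      have h2 : ∀ j, ∃ q, Bu.mulVec q = Mᵀ j := by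
        intro j
        have h := hM2 j
        rw [← range_basisMatrix bU] at h
        exact h
      choose q hq using h2
      have hMQ : M = Bu * (Matrix.of fun k j => q j k) := by
        apply Matrix.ext
        intro i j
        have h : (Bu * (Matrix.of fun k j => q j k))ᵀ j = Mᵀ j := by
          rw [col_mul]
          exact hq j
        exact (congrFun h i).symm
      obtain ⟨g, hg⟩ := (Bu.mulVecLin).exists_leftInverse_of_injective
        (LinearMap.ker_eq_bot.mpr (basisMatrix_injective bU))
      set L : Matrix (Fin ρ₁) (Fin d₁) ℝ := LinearMap.toMatrix' g with hLdef
      have hLBu : L * Bu = 1 := by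
        have h := LinearMap.toMatrix'_comp g Bu.mulVecLin
        rw [hg, LinearMap.toMatrix'_id, toMatrix'_basisMatrix] at h
        exact h.symm
      refine ⟨L * (Matrix.of P), ?_⟩
      show Bu * (L * Matrix.of P) * Bvᵀ = M
      rw [Matrix.mul_assoc, Matrix.mul_assoc, ← hMP]
      conv_lhs => rw [hMQ]
      rw [← Matrix.mul_assoc L Bu, hLBu, Matrix.one_mul]
      exact hMQ.symm
  have h₃ : finrank ℝ (S₁ ⊓ S₂ : Submodule ℝ (Matrix (Fin d₁) (Fin d₂) ℝ)) = ρ₁ * ρ₂ := by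
    rw [← hΨrange, LinearMap.finrank_range_of_inj hΨinj, Module.finrank_matrix,
      Fintype.card_fin, Fintype.card_fin, Module.finrank_self, mul_one]
  have key := Submodule.finrank_sup_add_finrank_inf_eq S₁ S₂
  rw [h₁, h₂, h₃] at key
  rw [hrange]
  omega
end

section
/- Constant rank of the symmetric CP tensor factorization Jacobian: let X be a real d×r matrix of full column rank (Matrix.rank X = r, so r ≤ d). Then the real-linear map Φ from Matrix (Fin d) (Fin r) ℝ to third-order tensors (Fin d → Fin d → Fin d → ℝ), defined entrywise by Φ(D)(i, j, k) := Σ_{ℓ ∈ Fin r} (D_{iℓ}·X_{jℓ}·X_{kℓ} + X_{iℓ}·D_{jℓ}·X_{kℓ} + X_{iℓ}·X_{jℓ}·D_{kℓ}), is injective; equivalently, its range has dimension d·r. -/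
open Matrix

/-- The Jacobian at `X` of the symmetric canonical polyadic map
`F(X) = ∑ ℓ, X_ℓ ⊗ X_ℓ ⊗ X_ℓ`, where third-order tensors are represented as functions
`Fin d → Fin d → Fin d → ℝ`. -/
def cpSymJacobian {d r : ℕ} (X : Matrix (Fin d) (Fin r) ℝ) :
    Matrix (Fin d) (Fin r) ℝ →ₗ[ℝ] (Fin d → Fin d → Fin d → ℝ) where
  toFun D := fun i j k => ∑ ℓ : Fin r,
    (D i ℓ * X j ℓ * X k ℓ + X i ℓ * D j ℓ * X k ℓ + X i ℓ * X j ℓ * D k ℓ)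
  map_add' D₁ D₂ := by
    funext i j k
    simp only [Matrix.add_apply, Pi.add_apply]
    rw [← Finset.sum_add_distrib]
    exact Finset.sum_congr rfl fun ℓ _ => by ring
  map_smul' c D := by
    funext i j k
    simp only [Matrix.smul_apply, Pi.smul_apply, smul_eq_mul, RingHom.id_apply]
    rw [Finset.mul_sum]
    exact Finset.sum_congr rfl fun ℓ _ => by ring

/-- Constant rank of the symmetric CP tensor factorization Jacobian: if `X` has full column
rank `r`, then the Jacobian is injective; equivalently, its range has dimension `d·r`. -/
theorem cpSymJacobian_injective {d r : ℕ} (X : Matrix (Fin d) (Fin r) ℝ)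
    (hX : X.rank = r) :
    Function.Injective (cpSymJacobian X) ∧
      Module.finrank ℝ (LinearMap.range (cpSymJacobian X)) = d * r := by
  have hGrank : (Xᵀ * X).rank = r := by rw [Matrix.rank_transpose_mul_self, hX]
  have hGunit : IsUnit (Xᵀ * X) := by
    rw [← Matrix.mulVec_surjective_iff_isUnit]
    have htop : LinearMap.range (Xᵀ * X).mulVecLin = ⊤ := by
      apply Submodule.eq_top_of_finrank_eq
      rw [← Matrix.rank, hGrank, Module.finrank_fintype_fun_eq_card, Fintype.card_fin]
    intro v
    have hv : v ∈ LinearMap.range (Xᵀ * X).mulVecLin := by rw [htop]; trivial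
    obtain ⟨y, hy⟩ := hv
    exact ⟨y, by simpa only [Matrix.mulVecLin_apply] using hy⟩
  set W : Matrix (Fin d) (Fin r) ℝ := X * (Xᵀ * X)⁻¹ with hWdef
  have hW : Xᵀ * W = 1 := by
    rw [hWdef, ← Matrix.mul_assoc,
      Matrix.mul_nonsing_inv _ ((Matrix.isUnit_iff_isUnit_det _).mp hGunit)]
  have hXW : ∀ ℓ m, (∑ j, X j ℓ * W j m) = if ℓ = m then (1:ℝ) else 0 := by
    intro ℓ m
    have := congrFun (congrFun hW ℓ) m
    simpa [Matrix.mul_apply, Matrix.transpose_apply, Matrix.one_apply] using this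
  have hinj : Function.Injective (cpSymJacobian X) := by
    rw [injective_iff_map_eq_zero]
    intro D hD
    have h0 : ∀ i j k, (∑ ℓ : Fin r,
        (D i ℓ * X j ℓ * X k ℓ + X i ℓ * D j ℓ * X k ℓ + X i ℓ * X j ℓ * D k ℓ)) = 0 :=
      fun i j k => congrFun (congrFun (congrFun hD i) j) k
    have key : ∀ (i : Fin d) (m n : Fin r),
        (if n = m then D i n else 0) + X i n * (∑ j, D j n * W j m)
          + X i m * (∑ j, D j m * W j n) = 0 := by
      intro i m n
      have h1 : (∑ j, ∑ k, (∑ ℓ : Fin r,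
          (D i ℓ * X j ℓ * X k ℓ + X i ℓ * D j ℓ * X k ℓ + X i ℓ * X j ℓ * D k ℓ))
            * (W j m * W k n)) = 0 := by
        simp [h0]
      have h2 : (∑ j, ∑ k, (∑ ℓ : Fin r,
          (D i ℓ * X j ℓ * X k ℓ + X i ℓ * D j ℓ * X k ℓ + X i ℓ * X j ℓ * D k ℓ))
            * (W j m * W k n))
          = ∑ ℓ : Fin r, (D i ℓ * (∑ j, X j ℓ * W j m) * (∑ k, X k ℓ * W k n)
            + X i ℓ * (∑ j, D j ℓ * W j m) * (∑ k, X k ℓ * W k n)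
            + X i ℓ * (∑ j, X j ℓ * W j m) * (∑ k, D k ℓ * W k n)) := by
        have swap : ∀ (f : Fin r → Fin d → Fin d → ℝ),
            (∑ j, ∑ k, ∑ ℓ, f ℓ j k) = ∑ ℓ, ∑ j, ∑ k, f ℓ j k := by
          intro f
          rw [show (∑ j, ∑ k, ∑ ℓ, f ℓ j k) = ∑ j, ∑ ℓ, ∑ k, f ℓ j k from
            Finset.sum_congr rfl fun j _ => Finset.sum_comm]
          exact Finset.sum_comm
        calc (∑ j, ∑ k, (∑ ℓ : Fin r,
              (D i ℓ * X j ℓ * X k ℓ + X i ℓ * D j ℓ * X k ℓ + X i ℓ * X j ℓ * D k ℓ))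
                * (W j m * W k n))
            = ∑ j, ∑ k, ∑ ℓ : Fin r,
              ((D i ℓ * X j ℓ * X k ℓ + X i ℓ * D j ℓ * X k ℓ + X i ℓ * X j ℓ * D k ℓ)
                * (W j m * W k n)) := by
              exact Finset.sum_congr rfl fun j _ => Finset.sum_congr rfl fun k _ =>
                Finset.sum_mul _ _ _
          _ = ∑ ℓ : Fin r, ∑ j, ∑ k,
              ((D i ℓ * X j ℓ * X k ℓ + X i ℓ * D j ℓ * X k ℓ + X i ℓ * X j ℓ * D k ℓ)
                * (W j m * W k n)) := swap _
          _ = _ := by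
              have e : ∀ (a : ℝ) (u v : Fin d → ℝ),
                  a * (∑ j, u j) * (∑ k, v k) = ∑ j, ∑ k, a * u j * v k := by
                intro a u v
                rw [mul_assoc, Finset.sum_mul_sum, Finset.mul_sum]
                refine Finset.sum_congr rfl fun j _ => ?_
                rw [Finset.mul_sum]
                exact Finset.sum_congr rfl fun k _ => by ring
              refine Finset.sum_congr rfl fun ℓ _ => ?_
              rw [e, e, e, ← Finset.sum_add_distrib, ← Finset.sum_add_distrib]
              refine Finset.sum_congr rfl fun j _ => ?_
              rw [← Finset.sum_add_distrib, ← Finset.sum_add_distrib]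
              exact Finset.sum_congr rfl fun k _ => by ring
      rw [h2] at h1
      simp only [hXW, mul_ite, mul_one, mul_zero, ite_mul, zero_mul, one_mul,
        Finset.sum_add_distrib, Finset.sum_ite_eq', Finset.mem_univ, if_true] at h1
      linarith [h1]
    have hB0 : ∀ ℓ m, (∑ j, D j ℓ * W j m) = 0 := by
      have key2 : ∀ m n p : Fin r,
          (if n = m then (∑ i, D i n * W i p) else 0)
            + (if n = p then (1:ℝ) else 0) * (∑ j, D j n * W j m)
            + (if m = p then (1:ℝ) else 0) * (∑ j, D j m * W j n) = 0 := by
        intro m n p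
        have h1 : (∑ i, ((if n = m then D i n else 0) + X i n * (∑ j, D j n * W j m)
            + X i m * (∑ j, D j m * W j n)) * W i p) = 0 := by
          simp [key]
        have h2 : (∑ i, ((if n = m then D i n else 0) + X i n * (∑ j, D j n * W j m)
            + X i m * (∑ j, D j m * W j n)) * W i p)
            = (if n = m then (∑ i, D i n * W i p) else 0)
              + (∑ i, X i n * W i p) * (∑ j, D j n * W j m)
              + (∑ i, X i m * W i p) * (∑ j, D j m * W j n) := by
          simp only [add_mul, Finset.sum_add_distrib]
          congr 1
          · congr 1
            · by_cases h : n = m <;> simp [h]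
            · rw [Finset.sum_mul]
              exact Finset.sum_congr rfl fun i _ => by ring
          · rw [Finset.sum_mul]
            exact Finset.sum_congr rfl fun i _ => by ring
        rw [h2, hXW, hXW] at h1
        exact h1
      have hoff : ∀ m n : Fin r, n ≠ m → (∑ j, D j n * W j m) = 0 := by
        intro m n hnm
        have := key2 m n n
        simp [hnm, Ne.symm hnm] at this
        exact this
      intro ℓ m
      rcases eq_or_ne ℓ m with h | h
      · subst h
        have := key2 ℓ ℓ ℓ
        simp at this
        linarith
      · exact hoff m ℓ h
    funext i m
    have := key i m m
    simp [hB0] at this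
    exact this
  refine ⟨hinj, ?_⟩
  rw [LinearMap.finrank_range_of_inj hinj]
  simp [Module.finrank_matrix]
end

section
/- Constant rank of the asymmetric CP tensor factorization Jacobian: let W, X, Y be real matrices of sizes d₁×r, d₂×r, d₃×r, each of full column rank r (so r ≤ min{d₁, d₂, d₃}). Then the real-linear map Φ from triples (A, B, C) ∈ Matrix (Fin d₁) (Fin r) ℝ × Matrix (Fin d₂) (Fin r) ℝ × Matrix (Fin d₃) (Fin r) ℝ to third-order tensors (Fin d₁ → Fin d₂ → Fin d₃ → ℝ), defined entrywise by Φ(A, B, C)(i, j, k) := Σ_{ℓ ∈ Fin r} (A_{iℓ}·X_{jℓ}·Y_{kℓ} + W_{iℓ}·B_{jℓ}·Y_{kℓ} + W_{iℓ}·X_{jℓ}·C_{kℓ}), has range of dimension (d₁ + d₂ + d₃ − 2)·r. -/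
open Matrix

/-- The Jacobian at `(W, X, Y)` of the asymmetric canonical polyadic map
`F(W,X,Y) = ∑ ℓ, W_ℓ ⊗ X_ℓ ⊗ Y_ℓ`, where third-order tensors are represented as functions
`Fin d₁ → Fin d₂ → Fin d₃ → ℝ`. -/
def cpAsymJacobian {d₁ d₂ d₃ r : ℕ} (W : Matrix (Fin d₁) (Fin r) ℝ)
    (X : Matrix (Fin d₂) (Fin r) ℝ) (Y : Matrix (Fin d₃) (Fin r) ℝ) :
    (Matrix (Fin d₁) (Fin r) ℝ × Matrix (Fin d₂) (Fin r) ℝ × Matrix (Fin d₃) (Fin r) ℝ)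
      →ₗ[ℝ] (Fin d₁ → Fin d₂ → Fin d₃ → ℝ) where
  toFun t := fun i j k => ∑ ℓ : Fin r,
    (t.1 i ℓ * X j ℓ * Y k ℓ + W i ℓ * t.2.1 j ℓ * Y k ℓ + W i ℓ * X j ℓ * t.2.2 k ℓ)
  map_add' t s := by
    funext i j k
    simp only [Prod.fst_add, Prod.snd_add, Matrix.add_apply, Pi.add_apply]
    rw [← Finset.sum_add_distrib]
    exact Finset.sum_congr rfl fun ℓ _ => by ring
  map_smul' c t := by
    funext i j k
    simp only [Prod.smul_fst, Prod.smul_snd, Matrix.smul_apply, Pi.smul_apply,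
      smul_eq_mul, RingHom.id_apply]
    rw [Finset.mul_sum]
    exact Finset.sum_congr rfl fun ℓ _ => by ring

/-! The kernel of the Jacobian is the tangent space of the scaling indeterminacy
`(W, X, Y) ↦ (W D₁, X D₂, Y D₃)`, `D₁ D₂ D₃ = 1`, of the CP decomposition: the triples
`(W diag a, X diag b, Y diag c)` with `a + b + c = 0`, a space of dimension `2r` because `W` and
`X` are injective. Conversely, contracting `Φ(A, B, C) = 0` in modes 2 and 3 with left inverses
`X⁺`, `Y⁺` and reading the entries `(i, m, m)` gives `A = W diag(-(X⁺B)ₘₘ - (Y⁺C)ₘₘ)`; the cyclic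
symmetry of `Φ` gives the same for `B` and `C`. Rank–nullity then yields `(d₁ + d₂ + d₃)r − 2r`. -/

theorem Matrix.exists_mul_eq_one_of_rank_eq_card {K m n : Type*} [Field K] [Fintype m]
    [Fintype n] [DecidableEq n] (A : Matrix m n K) (hA : A.rank = Fintype.card n) :
    ∃ B : Matrix n m K, B * A = 1 := by
  classical
  have hker : LinearMap.ker A.mulVecLin = ⊥ := by
    have := LinearMap.finrank_range_add_finrank_ker A.mulVecLin
    rw [Module.finrank_fintype_fun_eq_card, ← Matrix.rank, hA, Nat.add_eq_left] at this
    exact Submodule.finrank_eq_zero.mp this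
  obtain ⟨g, hg⟩ := LinearMap.exists_leftInverse_of_injective A.mulVecLin hker
  refine ⟨LinearMap.toMatrix' g, ?_⟩
  rw [← LinearMap.toMatrix'_toLin' A, ← LinearMap.toMatrix'_comp, Matrix.toLin'_apply', hg,
    LinearMap.toMatrix'_id]

section Tensor

variable {R κ ι₁ ι₂ ι₃ μ₁ μ₂ μ₃ : Type*} [CommSemiring R] [Fintype κ]
  [Fintype ι₁] [Fintype ι₂] [Fintype ι₃]

def cpTensor (W : Matrix ι₁ κ R) (X : Matrix ι₂ κ R) (Y : Matrix ι₃ κ R) : ι₁ → ι₂ → ι₃ → R :=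
  fun i j k => ∑ ℓ, W i ℓ * X j ℓ * Y k ℓ

def tensorContract (P : Matrix μ₁ ι₁ R) (Q : Matrix μ₂ ι₂ R) (S : Matrix μ₃ ι₃ R) :
    (ι₁ → ι₂ → ι₃ → R) →ₗ[R] (μ₁ → μ₂ → μ₃ → R) where
  toFun T i j k := ∑ a, ∑ b, ∑ c, P i a * Q j b * S k c * T a b c
  map_add' T T' := by
    funext i j k
    simp only [Pi.add_apply, mul_add, Finset.sum_add_distrib]
  map_smul' c T := by
    funext i j k
    simp only [Pi.smul_apply, smul_eq_mul, RingHom.id_apply, Finset.mul_sum]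
    exact Finset.sum_congr rfl fun _ _ => Finset.sum_congr rfl fun _ _ =>
      Finset.sum_congr rfl fun _ _ => by ring

theorem tensorContract_cpTensor (P : Matrix μ₁ ι₁ R) (Q : Matrix μ₂ ι₂ R) (S : Matrix μ₃ ι₃ R)
    (W : Matrix ι₁ κ R) (X : Matrix ι₂ κ R) (Y : Matrix ι₃ κ R) :
    tensorContract P Q S (cpTensor W X Y) = cpTensor (P * W) (Q * X) (S * Y) := by
  funext i j k
  simp only [tensorContract, cpTensor, LinearMap.coe_mk, AddHom.coe_mk, Matrix.mul_apply,
    Finset.mul_sum, Finset.sum_mul]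
  simp_rw [Finset.sum_comm (γ := κ)]
  rw [Finset.sum_comm_cycle]
  refine Finset.sum_congr rfl fun c _ => ?_
  rw [Finset.sum_comm]
  exact Finset.sum_congr rfl fun b _ => Finset.sum_congr rfl fun a _ =>
    Finset.sum_congr rfl fun ℓ _ => by ring

end Tensor

theorem Matrix.diag_mul_mul_diagonal_of_mul_eq_one {R m n : Type*} [CommSemiring R] [Fintype m]
    [Fintype n] [DecidableEq n] {W' : Matrix n m R} {W : Matrix m n R} (h : W' * W = 1)
    (v : n → R) : (W' * (W * diagonal v)).diag = v := by
  rw [← Matrix.mul_assoc, h, Matrix.one_mul, diag_diagonal]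

section Rescaling

variable {R κ ι₁ ι₂ ι₃ : Type*} [CommRing R] [Fintype κ] [DecidableEq κ]

def cpRescaling (W : Matrix ι₁ κ R) (X : Matrix ι₂ κ R) (Y : Matrix ι₃ κ R) :
    ((κ → R) × (κ → R)) →ₗ[R] (Matrix ι₁ κ R × Matrix ι₂ κ R × Matrix ι₃ κ R) where
  toFun p := (W * diagonal p.1, X * diagonal p.2, Y * diagonal (-p.1 - p.2))
  map_add' p q := by
    ext <;> simp only [Prod.fst_add, Prod.snd_add, Prod.mk_add_mk, mul_diagonal, Pi.add_apply,
      Pi.sub_apply, Pi.neg_apply, Matrix.add_apply] <;> ring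
  map_smul' c p := by
    ext <;> simp only [Prod.smul_fst, Prod.smul_snd, Prod.smul_mk, mul_diagonal, Pi.sub_apply,
      Pi.neg_apply, Pi.smul_apply, Matrix.smul_apply, smul_eq_mul, RingHom.id_apply] <;> ring

theorem cpRescaling_injective [Fintype ι₁] [Fintype ι₂] {W : Matrix ι₁ κ R}
    {X : Matrix ι₂ κ R} (Y : Matrix ι₃ κ R) {W' : Matrix κ ι₁ R} {X' : Matrix κ ι₂ R}
    (hW' : W' * W = 1) (hX' : X' * X = 1) : Function.Injective (cpRescaling W X Y) := by
  rintro ⟨a, b⟩ ⟨a', b'⟩ h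
  have ha := congrArg (fun t => (W' * t.1).diag) h
  have hb := congrArg (fun t => (X' * t.2.1).diag) h
  simp only [cpRescaling, LinearMap.coe_mk, AddHom.coe_mk,
    Matrix.diag_mul_mul_diagonal_of_mul_eq_one hW',
    Matrix.diag_mul_mul_diagonal_of_mul_eq_one hX'] at ha hb
  rw [ha, hb]

end Rescaling

section Jacobian

variable {d₁ d₂ d₃ r : ℕ} {W : Matrix (Fin d₁) (Fin r) ℝ} {X : Matrix (Fin d₂) (Fin r) ℝ}
  {Y : Matrix (Fin d₃) (Fin r) ℝ} {A : Matrix (Fin d₁) (Fin r) ℝ} {B : Matrix (Fin d₂) (Fin r) ℝ}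
  {C : Matrix (Fin d₃) (Fin r) ℝ}

theorem cpAsymJacobian_apply_eq_cpTensor (t : Matrix (Fin d₁) (Fin r) ℝ ×
    Matrix (Fin d₂) (Fin r) ℝ × Matrix (Fin d₃) (Fin r) ℝ) :
    cpAsymJacobian W X Y t = cpTensor t.1 X Y + cpTensor W t.2.1 Y + cpTensor W X t.2.2 := by
  funext i j k
  simp only [cpAsymJacobian, cpTensor, LinearMap.coe_mk, AddHom.coe_mk, Pi.add_apply,
    Finset.sum_add_distrib]

theorem cpAsymJacobian_apply_rotate (i : Fin d₁) (j : Fin d₂) (k : Fin d₃) :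
    cpAsymJacobian X Y W (B, C, A) j k i = cpAsymJacobian W X Y (A, B, C) i j k := by
  simp only [cpAsymJacobian, LinearMap.coe_mk, AddHom.coe_mk]
  exact Finset.sum_congr rfl fun _ _ => by ring

theorem mem_ker_cpAsymJacobian_rotate (h : (A, B, C) ∈ LinearMap.ker (cpAsymJacobian W X Y)) :
    (B, C, A) ∈ LinearMap.ker (cpAsymJacobian X Y W) := by
  rw [LinearMap.mem_ker] at h ⊢
  funext j k i
  rw [cpAsymJacobian_apply_rotate, h]
  rfl

theorem eq_mul_diagonal_of_mem_ker_cpAsymJacobian {X' : Matrix (Fin r) (Fin d₂) ℝ}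
    {Y' : Matrix (Fin r) (Fin d₃) ℝ} (hX' : X' * X = 1) (hY' : Y' * Y = 1)
    (h : (A, B, C) ∈ LinearMap.ker (cpAsymJacobian W X Y)) :
    A = W * diagonal (-(X' * B).diag - (Y' * C).diag) := by
  have hcontr := congrArg (tensorContract (1 : Matrix (Fin d₁) (Fin d₁) ℝ) X' Y')
    (LinearMap.mem_ker.mp h)
  rw [cpAsymJacobian_apply_eq_cpTensor, map_add, map_add, map_zero, tensorContract_cpTensor,
    tensorContract_cpTensor, tensorContract_cpTensor, hX', hY'] at hcontr
  ext i m
  have him := congr_fun (congr_fun (congr_fun hcontr i) m) m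
  simp only [cpTensor, Pi.add_apply, Pi.zero_apply, Pi.sub_apply, Pi.neg_apply, one_apply,
    Matrix.one_mul, mul_ite, ite_mul, mul_one, mul_zero, zero_mul, Finset.sum_ite_eq,
    Finset.mem_univ, if_true, mul_diagonal, diag_apply] at him ⊢
  linarith

theorem ker_cpAsymJacobian_eq_range_cpRescaling {W' : Matrix (Fin r) (Fin d₁) ℝ}
    {X' : Matrix (Fin r) (Fin d₂) ℝ} {Y' : Matrix (Fin r) (Fin d₃) ℝ}
    (hW' : W' * W = 1) (hX' : X' * X = 1) (hY' : Y' * Y = 1) :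
    LinearMap.ker (cpAsymJacobian W X Y) = LinearMap.range (cpRescaling W X Y) := by
  apply le_antisymm
  · rintro ⟨A, B, C⟩ h
    have hA := eq_mul_diagonal_of_mem_ker_cpAsymJacobian hX' hY' h
    have hB := eq_mul_diagonal_of_mem_ker_cpAsymJacobian hY' hW'
      (mem_ker_cpAsymJacobian_rotate h)
    have hC := eq_mul_diagonal_of_mem_ker_cpAsymJacobian hW' hX'
      (mem_ker_cpAsymJacobian_rotate (mem_ker_cpAsymJacobian_rotate h))
    have ha : (W' * A).diag = -(X' * B).diag - (Y' * C).diag := by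
      rw [hA, Matrix.diag_mul_mul_diagonal_of_mul_eq_one hW']
    have hb : (X' * B).diag = -(Y' * C).diag - (W' * A).diag := by
      rw [hB, Matrix.diag_mul_mul_diagonal_of_mul_eq_one hX']
    refine ⟨((W' * A).diag, (X' * B).diag), ?_⟩
    simp only [cpRescaling, LinearMap.coe_mk, AddHom.coe_mk]
    exact Prod.ext (by rw [ha]; exact hA.symm) (Prod.ext (by rw [hb]; exact hB.symm) hC.symm)
  · rintro _ ⟨p, rfl⟩
    funext i j k
    simp only [cpAsymJacobian, cpRescaling, LinearMap.coe_mk, AddHom.coe_mk, Matrix.mul_diagonal]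
    exact Finset.sum_eq_zero fun _ _ => by simp only [Pi.sub_apply, Pi.neg_apply]; ring

end Jacobian

/-- Constant rank of the asymmetric CP tensor factorization Jacobian: if `W`, `X`, `Y` all
have full column rank `r`, then the range of the Jacobian has dimension
`(d₁ + d₂ + d₃ − 2)·r`. -/
theorem cpAsymJacobian_rank {d₁ d₂ d₃ r : ℕ} (W : Matrix (Fin d₁) (Fin r) ℝ)
    (X : Matrix (Fin d₂) (Fin r) ℝ) (Y : Matrix (Fin d₃) (Fin r) ℝ)
    (hW : W.rank = r) (hX : X.rank = r) (hY : Y.rank = r) :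
    Module.finrank ℝ (LinearMap.range (cpAsymJacobian W X Y)) = (d₁ + d₂ + d₃ - 2) * r := by
  obtain ⟨W', hW'⟩ := W.exists_mul_eq_one_of_rank_eq_card (by rw [hW, Fintype.card_fin])
  obtain ⟨X', hX'⟩ := X.exists_mul_eq_one_of_rank_eq_card (by rw [hX, Fintype.card_fin])
  obtain ⟨Y', hY'⟩ := Y.exists_mul_eq_one_of_rank_eq_card (by rw [hY, Fintype.card_fin])
  have hker : Module.finrank ℝ (LinearMap.ker (cpAsymJacobian W X Y)) = r + r := by
    rw [ker_cpAsymJacobian_eq_range_cpRescaling hW' hX' hY',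
      LinearMap.finrank_range_of_inj (cpRescaling_injective Y hW' hX'), Module.finrank_prod,
      Module.finrank_fin_fun]
  have hrank := LinearMap.finrank_range_add_finrank_ker (cpAsymJacobian W X Y)
  simp only [hker, Module.finrank_prod, Module.finrank_matrix, Fintype.card_fin,
    Module.finrank_self, mul_one] at hrank
  rw [Nat.sub_mul, Nat.add_mul, Nat.add_mul]
  omega
end

section
/- Restricted sharpness and restricted Lipschitzness of the robust ℓ₁ matrix-sensing loss: let 𝒜 : Matrix (Fin d₁) (Fin d₂) ℝ → (Fin m → ℝ) be a real-linear map, I a subset of Fin m, r a natural number, and ω₀, ω₂ > 0 such that for every matrix Z with Matrix.rank Z ≤ 2r: (upper ℓ₁/ℓ₂-RIP) Σ_{i ∈ Fin m} |(𝒜 Z)_i| ≤ ω₂·‖Z‖_F, and (I-outlier bound) ω₀·‖Z‖_F ≤ Σ_{i ∉ I} |(𝒜 Z)_i| − Σ_{i ∈ I} |(𝒜 Z)_i|. Let Z* be a matrix with Matrix.rank Z* ≤ r and let b : Fin m → ℝ satisfy b_i = (𝒜 Z*)_i for every i ∉ I (b_i arbitrary for i ∈ I). Define h(Z) := Σ_{i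 ∈ Fin m} |(𝒜 Z)_i − b_i|. Then: (sharpness) for every Z with Matrix.rank Z ≤ r, h(Z) − h(Z*) ≥ ω₀·‖Z − Z*‖_F; and (Lipschitzness) for all matrices Z, Z̃ with Matrix.rank (Z − Z̃) ≤ 2r, |h(Z) − h(Z̃)| ≤ ω₂·‖Z − Z̃‖_F. -/
open Matrix

/-- The Frobenius norm of a real matrix, `‖Z‖_F = √(∑ i j, Z i j ^ 2)`. -/
noncomputable def frobNorm {d₁ d₂ : ℕ} (Z : Matrix (Fin d₁) (Fin d₂) ℝ) : ℝ :=
  Real.sqrt (∑ i, ∑ j, Z i j ^ 2)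

/-- Restricted sharpness and restricted Lipschitzness of the robust `ℓ₁` matrix-sensing loss
`h(Z) = ∑ i, |𝒜 Z i − b i|` under the `ℓ₁/ℓ₂`-RIP upper bound and the `I`-outlier bound. -/
theorem robust_l1_loss_sharp_and_lipschitz {d₁ d₂ m : ℕ}
    (𝒜 : Matrix (Fin d₁) (Fin d₂) ℝ →ₗ[ℝ] (Fin m → ℝ))
    (I : Finset (Fin m)) (r : ℕ) (ω₀ ω₂ : ℝ) (hω₀ : 0 < ω₀) (hω₂ : 0 < ω₂)
    (hRIP : ∀ Z : Matrix (Fin d₁) (Fin d₂) ℝ, Z.rank ≤ 2 * r →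
      ∑ i, |𝒜 Z i| ≤ ω₂ * frobNorm Z)
    (houtlier : ∀ Z : Matrix (Fin d₁) (Fin d₂) ℝ, Z.rank ≤ 2 * r →
      ω₀ * frobNorm Z ≤ ∑ i ∈ Iᶜ, |𝒜 Z i| - ∑ i ∈ I, |𝒜 Z i|)
    (Zs : Matrix (Fin d₁) (Fin d₂) ℝ) (hZs : Zs.rank ≤ r)
    (b : Fin m → ℝ) (hb : ∀ i : Fin m, i ∉ I → b i = 𝒜 Zs i) :
    (∀ Z : Matrix (Fin d₁) (Fin d₂) ℝ, Z.rank ≤ r →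
      ω₀ * frobNorm (Z - Zs) ≤ (∑ i, |𝒜 Z i - b i|) - ∑ i, |𝒜 Zs i - b i|) ∧
      ∀ Z Z' : Matrix (Fin d₁) (Fin d₂) ℝ, (Z - Z').rank ≤ 2 * r →
        |(∑ i, |𝒜 Z i - b i|) - (∑ i, |𝒜 Z' i - b i|)| ≤ ω₂ * frobNorm (Z - Z') := by
  have hrank : ∀ A B : Matrix (Fin d₁) (Fin d₂) ℝ, (A - B).rank ≤ A.rank + B.rank := by
    intro A B
    rw [Matrix.rank, Matrix.rank, Matrix.rank]
    have hle : LinearMap.range (A - B).mulVecLin ≤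
        LinearMap.range A.mulVecLin ⊔ LinearMap.range B.mulVecLin := by
      rintro x ⟨y, rfl⟩
      rw [Matrix.mulVecLin_apply, Matrix.sub_mulVec]
      exact Submodule.sub_mem _ (Submodule.mem_sup_left ⟨y, rfl⟩)
        (Submodule.mem_sup_right ⟨y, rfl⟩)
    exact le_trans (Submodule.finrank_mono hle)
      (Submodule.finrank_add_le_finrank_add_finrank _ _)
  constructor
  · intro Z hZ
    have hD : (Z - Zs).rank ≤ 2 * r := le_trans (hrank Z Zs) (by omega)
    have hout := houtlier (Z - Zs) hD
    have h1 : ∑ i ∈ Iᶜ, |𝒜 (Z - Zs) i| =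
        ∑ i ∈ Iᶜ, (|𝒜 Z i - b i| - |𝒜 Zs i - b i|) := by
      refine Finset.sum_congr rfl fun i hi => ?_
      rw [Finset.mem_compl] at hi
      rw [hb i hi, map_sub]
      simp
    have h2 : ∑ i ∈ I, -|𝒜 (Z - Zs) i| ≤
        ∑ i ∈ I, (|𝒜 Z i - b i| - |𝒜 Zs i - b i|) := by
      refine Finset.sum_le_sum fun i _ => ?_
      have h := abs_sub_abs_le_abs_sub (𝒜 Zs i - b i) (𝒜 Z i - b i)
      have h3 : |𝒜 Zs i - b i - (𝒜 Z i - b i)| = |𝒜 (Z - Zs) i| := by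
        rw [map_sub, Pi.sub_apply, abs_sub_comm]
        ring_nf
      linarith [h3 ▸ h]
    have hsplit : (∑ i, |𝒜 Z i - b i|) - ∑ i, |𝒜 Zs i - b i| =
        (∑ i ∈ I, (|𝒜 Z i - b i| - |𝒜 Zs i - b i|)) +
          ∑ i ∈ Iᶜ, (|𝒜 Z i - b i| - |𝒜 Zs i - b i|) := by
      rw [Finset.sum_add_sum_compl I (fun i => |𝒜 Z i - b i| - |𝒜 Zs i - b i|),
        Finset.sum_sub_distrib]
    rw [Finset.sum_neg_distrib] at h2
    linarith
  · intro Z Z' hZZ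
    have hR := hRIP (Z - Z') hZZ
    have h1 : |(∑ i, |𝒜 Z i - b i|) - (∑ i, |𝒜 Z' i - b i|)| ≤
        ∑ i, |𝒜 (Z - Z') i| := by
      rw [← Finset.sum_sub_distrib]
      refine le_trans (Finset.abs_sum_le_sum_abs _ _) (Finset.sum_le_sum fun i _ => ?_)
      have h := abs_abs_sub_abs_le_abs_sub (𝒜 Z i - b i) (𝒜 Z' i - b i)
      have h3 : |𝒜 Z i - b i - (𝒜 Z' i - b i)| = |𝒜 (Z - Z') i| := by
        rw [map_sub, Pi.sub_apply]
        ring_nf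
      linarith [h3 ▸ h]
    linarith
end
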